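/- arXiv:2205.11608 — 5 statements merged into one kernel-verified Lean document; each statement's English description precedes it below -/
import Mathlib

section
/- Let (X,Σ,m) be a σ-finite measure space and let μ₁, μ₂, μ₃ be σ-finite measures on Σ, each absolutely continuous with respect to m. Let α ∈ (0,∞). If μ₁(E)^α ≤ μ₂(E)^α + μ₃(E)^α for every E ∈ Σ, then (dμ₁/dm)^α ≤ (dμ₂/dm)^α + (dμ₃/dm)^α holds m-almost everywhere. -/
open MeasureTheory
open scoped ENNReal

/-- If `μ₁(E)^α ≤ μ₂(E)^α + μ₃(E)^α` for every measurable set `E`, then the corresponding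
inequality holds `m`-a.e. for the Radon–Nikodým derivatives with respect to `m`. -/
theorem rnDeriv_rpow_le_of_measure_rpow_le
    {X : Type*} [MeasurableSpace X] (m μ₁ μ₂ μ₃ : Measure X)
    [SigmaFinite m] [SigmaFinite μ₁] [SigmaFinite μ₂] [SigmaFinite μ₃]
    (h₁ : μ₁ ≪ m) (h₂ : μ₂ ≪ m) (h₃ : μ₃ ≪ m)
    (α : ℝ) (hα : 0 < α)
    (h : ∀ E : Set X, MeasurableSet E → μ₁ E ^ α ≤ μ₂ E ^ α + μ₃ E ^ α) :
    ∀ᵐ x ∂m, μ₁.rnDeriv m x ^ α ≤ μ₂.rnDeriv m x ^ α + μ₃.rnDeriv m x ^ α := by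
  set f₁ := μ₁.rnDeriv m with hf₁
  set f₂ := μ₂.rnDeriv m with hf₂
  set f₃ := μ₃.rnDeriv m with hf₃
  have hm₁ : Measurable f₁ := μ₁.measurable_rnDeriv m
  have hm₂ : Measurable f₂ := μ₂.measurable_rnDeriv m
  have hm₃ : Measurable f₃ := μ₃.measurable_rnDeriv m
  -- coercion of rationals
  set c : ℚ → ℝ≥0∞ := fun q => ((Real.toNNReal (q : ℝ) : NNReal) : ℝ≥0∞) with hc
  have hcne : ∀ q, c q ≠ ∞ := fun q => ENNReal.coe_ne_top
  -- the family of bad sets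
  set A : ℚ × ℚ × ℚ → Set X := fun p =>
    {x | c p.1 ^ α + c p.2.1 ^ α < c p.2.2 ^ α ∧
      f₂ x < c p.1 ∧ f₃ x < c p.2.1 ∧ c p.2.2 < f₁ x} with hA
  have hAmeas : ∀ p, MeasurableSet (A p) := by
    intro p
    by_cases hp : c p.1 ^ α + c p.2.1 ^ α < c p.2.2 ^ α
    · have : A p = {x | f₂ x < c p.1} ∩ ({x | f₃ x < c p.2.1} ∩ {x | c p.2.2 < f₁ x}) := by
        ext x; simp [hA, hp, and_assoc]
      rw [this]
      exact (measurableSet_lt hm₂ measurable_const).inter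
        ((measurableSet_lt hm₃ measurable_const).inter
          (measurableSet_lt measurable_const hm₁))
    · have : A p = ∅ := by ext x; simp [hA, hp]
      rw [this]; exact MeasurableSet.empty
  -- each bad set is null
  have hnull : ∀ p, m (A p) = 0 := by
    intro p
    by_contra hne
    have hpos : 0 < m (A p) := pos_iff_ne_zero.mpr hne
    obtain ⟨E, hE, hEA, hE0, hEtop⟩ :=
      Measure.exists_subset_measure_lt_top (hAmeas p) hpos
    obtain ⟨x₀, hx₀⟩ : (A p).Nonempty := by
      rcases Set.eq_empty_or_nonempty (A p) with hAe | hne'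
      · rw [hAe] at hpos; simp at hpos
      · exact hne'
    have hp : c p.1 ^ α + c p.2.1 ^ α < c p.2.2 ^ α := hx₀.1
    -- bounds on the measures of E
    have hb₂ : μ₂ E ≤ c p.1 * m E := by
      calc μ₂ E = ∫⁻ x in E, f₂ x ∂m := (Measure.setLIntegral_rnDeriv h₂ E).symm
        _ ≤ ∫⁻ _ in E, c p.1 ∂m :=
            setLIntegral_mono' hE fun x hx => ((hEA hx).2.1).le
        _ = c p.1 * m E := by rw [setLIntegral_const]
    have hb₃ : μ₃ E ≤ c p.2.1 * m E := by
      calc μ₃ E = ∫⁻ x in E, f₃ x ∂m := (Measure.setLIntegral_rnDeriv h₃ E).symm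
        _ ≤ ∫⁻ _ in E, c p.2.1 ∂m :=
            setLIntegral_mono' hE fun x hx => ((hEA hx).2.2.1).le
        _ = c p.2.1 * m E := by rw [setLIntegral_const]
    have hb₁ : c p.2.2 * m E ≤ μ₁ E := by
      calc c p.2.2 * m E = ∫⁻ _ in E, c p.2.2 ∂m := (setLIntegral_const _ _).symm
        _ ≤ ∫⁻ x in E, f₁ x ∂m :=
            setLIntegral_mono' hE fun x hx => ((hEA hx).2.2.2).le
        _ = μ₁ E := Measure.setLIntegral_rnDeriv h₁ E
    have hmE : (m E) ^ α ≠ 0 := (ENNReal.rpow_pos hE0 hEtop.ne).ne'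
    have hmEtop : (m E) ^ α ≠ ∞ := (ENNReal.rpow_lt_top_of_nonneg hα.le hEtop.ne).ne
    have key : c p.2.2 ^ α * (m E) ^ α ≤ (c p.1 ^ α + c p.2.1 ^ α) * (m E) ^ α := by
      calc c p.2.2 ^ α * (m E) ^ α = (c p.2.2 * m E) ^ α :=
            (ENNReal.mul_rpow_of_nonneg _ _ hα.le).symm
        _ ≤ μ₁ E ^ α := ENNReal.rpow_le_rpow hb₁ hα.le
        _ ≤ μ₂ E ^ α + μ₃ E ^ α := h E hE
        _ ≤ (c p.1 * m E) ^ α + (c p.2.1 * m E) ^ α :=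
            add_le_add (ENNReal.rpow_le_rpow hb₂ hα.le) (ENNReal.rpow_le_rpow hb₃ hα.le)
        _ = (c p.1 ^ α + c p.2.1 ^ α) * (m E) ^ α := by
            rw [ENNReal.mul_rpow_of_nonneg _ _ hα.le, ENNReal.mul_rpow_of_nonneg _ _ hα.le,
              add_mul]
    have : c p.2.2 ^ α ≤ c p.1 ^ α + c p.2.1 ^ α :=
      (ENNReal.mul_le_mul_iff_left hmE hmEtop).mp key
    exact absurd this (not_le.mpr hp)
  -- the bad set is covered by the union of the A p
  have hcover : {x | ¬ f₁ x ^ α ≤ f₂ x ^ α + f₃ x ^ α} ⊆ ⋃ p, A p := by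
    intro x hx
    rw [Set.mem_setOf_eq, not_le] at hx
    set t := f₂ x ^ α + f₃ x ^ α with ht
    have ht_top : t ≠ ∞ := by
      rcases eq_or_ne (f₁ x) ∞ with h1 | h1
      ·
        -- t < f₁ x ^ α, if t = ∞ then f₁ x ^ α > ∞, impossible
        intro htop
        rw [htop] at hx
        exact (not_top_lt hx)
      · intro htop
        rw [htop] at hx
        exact (not_top_lt hx)
    -- pick s
    have hts : t ^ (1/α) < f₁ x := by
      have h1 : t ^ (1/α) < (f₁ x ^ α) ^ (1/α) :=
        ENNReal.rpow_lt_rpow hx (by positivity)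
      rwa [← ENNReal.rpow_mul, mul_one_div_cancel hα.ne', ENNReal.rpow_one] at h1
    obtain ⟨s, hs0, hs1, hs2⟩ := ENNReal.lt_iff_exists_rat_btwn.mp hts
    have hts' : t < c s ^ α := by
      have := ENNReal.rpow_lt_rpow hs1 hα
      rwa [← ENNReal.rpow_mul, one_div_mul_cancel hα.ne', ENNReal.rpow_one] at this
    have hcs_top : c s ^ α ≠ ∞ := (ENNReal.rpow_lt_top_of_nonneg hα.le (hcne s)).ne
    set δ := c s ^ α - t with hδ
    have hδ0 : δ ≠ 0 := by
      rw [hδ]; exact (tsub_pos_of_lt hts').ne'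
    have hδ2 : δ / 2 ≠ 0 := by
      simp [ENNReal.div_eq_zero_iff, hδ0]
    have hf₂top : f₂ x ^ α ≠ ∞ := fun htop => ht_top (by rw [ht, htop, top_add])
    have hf₃top : f₃ x ^ α ≠ ∞ := fun htop => ht_top (by rw [ht, htop, add_top])
    -- pick q
    have hq' : f₂ x < (f₂ x ^ α + δ / 2) ^ (1/α) := by
      have h1 : f₂ x ^ α < f₂ x ^ α + δ / 2 := ENNReal.lt_add_right hf₂top hδ2
      have h2 := ENNReal.rpow_lt_rpow h1 (by positivity : (0:ℝ) < 1/α)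
      rwa [← ENNReal.rpow_mul, mul_one_div_cancel hα.ne', ENNReal.rpow_one] at h2
    obtain ⟨q, hq0, hq1, hq2⟩ := ENNReal.lt_iff_exists_rat_btwn.mp hq'
    have hqα : c q ^ α < f₂ x ^ α + δ / 2 := by
      have := ENNReal.rpow_lt_rpow hq2 hα
      rwa [← ENNReal.rpow_mul, one_div_mul_cancel hα.ne', ENNReal.rpow_one] at this
    -- pick r
    have hr' : f₃ x < (f₃ x ^ α + δ / 2) ^ (1/α) := by
      have h1 : f₃ x ^ α < f₃ x ^ α + δ / 2 := ENNReal.lt_add_right hf₃top hδ2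
      have h2 := ENNReal.rpow_lt_rpow h1 (by positivity : (0:ℝ) < 1/α)
      rwa [← ENNReal.rpow_mul, mul_one_div_cancel hα.ne', ENNReal.rpow_one] at h2
    obtain ⟨r, hr0, hr1, hr2⟩ := ENNReal.lt_iff_exists_rat_btwn.mp hr'
    have hrα : c r ^ α < f₃ x ^ α + δ / 2 := by
      have := ENNReal.rpow_lt_rpow hr2 hα
      rwa [← ENNReal.rpow_mul, one_div_mul_cancel hα.ne', ENNReal.rpow_one] at this
    -- the sum condition
    have hsum : c q ^ α + c r ^ α < c s ^ α := by
      calc c q ^ α + c r ^ α < (f₂ x ^ α + δ / 2) + (f₃ x ^ α + δ / 2) :=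
            ENNReal.add_lt_add hqα hrα
        _ = t + δ := by rw [ht, add_add_add_comm, ENNReal.add_halves]
        _ = c s ^ α := by rw [hδ, add_tsub_cancel_of_le hts'.le]
      -- done
    exact Set.mem_iUnion.mpr ⟨(q, r, s), hsum, hq1, hr1, hs2⟩
  -- conclude
  have : m {x | ¬ f₁ x ^ α ≤ f₂ x ^ α + f₃ x ^ α} = 0 :=
    measure_mono_null hcover (measure_iUnion_null hnull)
  exact this
end

section
/- Let (X,Σ,m) be a σ-finite measure space, B a separable Banach space, and E a Banach B-bundle over X. If the section space Γ₂(E) is a Hilbert space, then E(x) is a Hilbert space for m-a.e. x ∈ X. -/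
open MeasureTheory
open scoped ENNReal

/-- A *Banach `B`-bundle* over a measurable space `X`: a weakly measurable multivalued map
whose values are closed linear subspaces of `B`. -/
structure BanachBundle (X : Type*) [MeasurableSpace X]
    (B : Type*) [NormedAddCommGroup B] [NormedSpace ℝ B] where
  fiber : X → Submodule ℝ B
  isClosed_fiber : ∀ x, IsClosed (fiber x : Set B)
  weaklyMeasurable : ∀ U : Set B, IsOpen U →
    MeasurableSet {x | ((fiber x : Set B) ∩ U).Nonempty}

/-- The space `Γ_p(E)` of `L^p`-sections of a Banach bundle `E`, realized as the subspace of
`L^p(m;B)` of elements whose representatives take values in the fibers `m`-a.e. -/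
noncomputable def BanachBundle.sections {X B : Type*} [MeasurableSpace X]
    [NormedAddCommGroup B] [NormedSpace ℝ B]
    (m : Measure X) (p : ℝ≥0∞) [Fact (1 ≤ p)] (E : BanachBundle X B) :
    Submodule ℝ (Lp B p m) where
  carrier := {f | ∀ᵐ x ∂m, (f : X → B) x ∈ E.fiber x}
  zero_mem' := by
    filter_upwards [Lp.coeFn_zero B p m] with x hx
    show (((0 : Lp B p m) : X → B)) x ∈ E.fiber x
    rw [hx]
    exact (E.fiber x).zero_mem
  add_mem' := by
    intro f g hf hg
    filter_upwards [hf, hg, Lp.coeFn_add f g] with x h1 h2 h3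
    show (((f + g : Lp B p m) : X → B)) x ∈ E.fiber x
    rw [h3]
    exact (E.fiber x).add_mem h1 h2
  smul_mem' := by
    intro c f hf
    filter_upwards [hf, Lp.coeFn_smul c f] with x h1 h2
    show (((c • f : Lp B p m) : X → B)) x ∈ E.fiber x
    rw [h2]
    exact (E.fiber x).smul_mem c h1

/-!
Because `B` is separable and the fibres are closed, successive refinement along a dense sequence
of `B` (the Kuratowski–Ryll-Nardzewski construction) produces countably many strongly measurable
selections of `E` whose values are dense in every fibre; cutting each one off on the sets of a
σ-finite exhaustion where it is bounded turns them into countably many `L²`-sections with the same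
property. Applying the parallelogram law of `Γ₂(E)` to `1_s v` and `1_s w` equates the integrals of
`‖v + w‖² + ‖v - w‖²` and `2‖v‖² + 2‖w‖²` over every measurable `s`, so the law holds pointwise
a.e. for every pair of sections. For the countably many pairs above this gives one null set, off
which the law passes from the dense values to the whole fibre by continuity.
-/

open MeasureTheory Metric Set Filter Topology TopologicalSpace

theorem parallelogram_of_mem_closure {E : Type*} [SeminormedAddCommGroup E] {S : Set E}
    (hS : ∀ a ∈ S, ∀ b ∈ S, ‖a + b‖ ^ 2 + ‖a - b‖ ^ 2 = 2 * ‖a‖ ^ 2 + 2 * ‖b‖ ^ 2)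
    {a b : E} (ha : a ∈ closure S) (hb : b ∈ closure S) :
    ‖a + b‖ ^ 2 + ‖a - b‖ ^ 2 = 2 * ‖a‖ ^ 2 + 2 * ‖b‖ ^ 2 := by
  have hclosed : IsClosed
      {p : E × E | ‖p.1 + p.2‖ ^ 2 + ‖p.1 - p.2‖ ^ 2 = 2 * ‖p.1‖ ^ 2 + 2 * ‖p.2‖ ^ 2} :=
    isClosed_eq (by fun_prop) (by fun_prop)
  have hsub := closure_minimal (fun (p : E × E) (hp : p ∈ S ×ˢ S) => hS _ hp.1 _ hp.2) hclosed
  have hab : (a, b) ∈ closure (S ×ˢ S) := by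
    rw [closure_prod_eq]
    exact ⟨ha, hb⟩
  exact hsub hab

theorem IsClosed.mem_of_tendsto_of_inter_ball_nonempty {B : Type*} [MetricSpace B] {C : Set B}
    (hC : IsClosed C) {u : ℕ → B} {y : B} {ε : ℕ → ℝ} (hu : Tendsto u atTop (𝓝 y))
    (hε : Tendsto ε atTop (𝓝 0)) (h : ∀ k, (C ∩ ball (u k) (ε k)).Nonempty) : y ∈ C := by
  choose z hzC hz using h
  refine hC.mem_of_tendsto (tendsto_iff_dist_tendsto_zero.2 ?_)
    (Eventually.of_forall (f := atTop) hzC)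
  refine squeeze_zero (fun _ => dist_nonneg) (fun k => (dist_triangle _ (u k) _).trans
    (add_le_add_left (mem_ball.1 (hz k)).le _)) ?_
  simpa using hε.add (tendsto_iff_dist_tendsto_zero.1 hu)

section L2

variable {X B : Type*} [MeasurableSpace X] [NormedAddCommGroup B] {m : Measure X}

theorem MeasureTheory.MemLp.norm_toLp_sq {f : X → B} (hf : MemLp f 2 m) :
    ‖hf.toLp f‖ ^ 2 = ∫ x, ‖f x‖ ^ 2 ∂m := by
  rw [Lp.norm_toLp, hf.eLpNorm_eq_integral_rpow_norm two_ne_zero ENNReal.ofNat_ne_top,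
    ENNReal.toReal_ofReal (by positivity)]
  simp only [ENNReal.toReal_ofNat, Real.rpow_two]
  rw [← Real.rpow_natCast, ← Real.rpow_mul (integral_nonneg fun _ => by positivity)]
  norm_num

theorem MeasureTheory.MemLp.norm_toLp_indicator_sq {f : X → B} (hf : MemLp f 2 m) {s : Set X}
    (hs : MeasurableSet s) :
    ‖(hf.indicator hs).toLp _‖ ^ 2 = ∫ x in s, ‖f x‖ ^ 2 ∂m := by
  rw [norm_toLp_sq, ← integral_indicator hs]
  congr 1 with x
  by_cases hx : x ∈ s <;> simp [hx]

theorem ae_parallelogram_of_forall_indicator {f g : X → B} (hf : MemLp f 2 m) (hg : MemLp g 2 m)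
    (h : ∀ s (hs : MeasurableSet s),
      ‖(hf.indicator hs).toLp _ + (hg.indicator hs).toLp _‖ ^ 2
        + ‖(hf.indicator hs).toLp _ - (hg.indicator hs).toLp _‖ ^ 2
        = 2 * ‖(hf.indicator hs).toLp _‖ ^ 2 + 2 * ‖(hg.indicator hs).toLp _‖ ^ 2) :
    ∀ᵐ x ∂m, ‖f x + g x‖ ^ 2 + ‖f x - g x‖ ^ 2 = 2 * ‖f x‖ ^ 2 + 2 * ‖g x‖ ^ 2 := by
  have hI_add : Integrable (fun x => ‖f x + g x‖ ^ 2) m :=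
    (hf.add hg).integrable_norm_pow two_ne_zero
  have hI_sub : Integrable (fun x => ‖f x - g x‖ ^ 2) m :=
    (hf.sub hg).integrable_norm_pow two_ne_zero
  have hI_f : Integrable (fun x => 2 * ‖f x‖ ^ 2) m :=
    (hf.integrable_norm_pow two_ne_zero).const_mul 2
  have hI_g : Integrable (fun x => 2 * ‖g x‖ ^ 2) m :=
    (hg.integrable_norm_pow two_ne_zero).const_mul 2
  refine Integrable.ae_eq_of_forall_setIntegral_eq _ _ (hI_add.add hI_sub) (hI_f.add hI_g)
    fun s hs _ => ?_
  have hs_add : (hf.indicator hs).toLp _ + (hg.indicator hs).toLp _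
      = ((hf.add hg).indicator hs).toLp _ := by
    rw [← MemLp.toLp_add]
    exact MemLp.toLp_congr _ _ (.of_eq (indicator_add' s f g).symm)
  have hs_sub : (hf.indicator hs).toLp _ - (hg.indicator hs).toLp _
      = ((hf.sub hg).indicator hs).toLp _ := by
    rw [← MemLp.toLp_sub]
    exact MemLp.toLp_congr _ _ (.of_eq (indicator_sub' s f g).symm)
  have key := h s hs
  rw [hs_add, hs_sub, (hf.add hg).norm_toLp_indicator_sq hs,
    (hf.sub hg).norm_toLp_indicator_sq hs, hf.norm_toLp_indicator_sq hs,
    hg.norm_toLp_indicator_sq hs] at key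
  rw [integral_add hI_add.integrableOn hI_sub.integrableOn,
    integral_add hI_f.integrableOn hI_g.integrableOn, integral_const_mul, integral_const_mul]
  exact key

end L2

section MeasurableSelection

variable {X B : Type*} [MeasurableSpace X] [MetricSpace B] {F : X → Set B}
  (hF : ∀ U : Set B, IsOpen U → MeasurableSet {x | (F x ∩ U).Nonempty})
include hF

theorem measurableSet_nonempty_inter_comp {U : ℕ → Set B} (hU : ∀ n, IsOpen (U n))
    {σ : X → ℕ} (hσ : Measurable σ) : MeasurableSet {x | (F x ∩ U (σ x)).Nonempty} := by
  have : {x | (F x ∩ U (σ x)).Nonempty} = ⋃ n, σ ⁻¹' {n} ∩ {x | (F x ∩ U n).Nonempty} := by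
    ext x
    simp
  rw [this]
  exact .iUnion fun n => (hσ (measurableSet_singleton n)).inter (hF _ (hU n))

variable [SeparableSpace B] [Nonempty B]

theorem exists_measurable_index_start (hne : ∀ x, (F x).Nonempty) {r : ℝ} (hr : 0 < r) (j : ℕ) :
    ∃ σ : X → ℕ, Measurable σ ∧ (∀ x, (F x ∩ ball (denseSeq B (σ x)) r).Nonempty) ∧
      ∀ x, (F x ∩ ball (denseSeq B j) r).Nonempty → σ x = j := by
  classical
  have hex : ∀ x, ∃ n, (F x ∩ ball (denseSeq B n) r).Nonempty := fun x => by
    obtain ⟨y, hy⟩ := hne x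
    obtain ⟨n, hn⟩ := Metric.denseRange_iff.1 (denseRange_denseSeq B) y r hr
    exact ⟨n, y, hy, mem_ball.2 hn⟩
  refine ⟨fun x => if (F x ∩ ball (denseSeq B j) r).Nonempty then j else Nat.find (hex x),
    Measurable.ite (hF _ isOpen_ball) measurable_const
      (measurable_find hex fun n => hF _ isOpen_ball), fun x => ?_, fun x hx => if_pos hx⟩
  dsimp only
  split_ifs with hx
  exacts [hx, Nat.find_spec (hex x)]

theorem exists_measurable_index_refine {ρ : ℝ} (hρ : 0 < ρ) {σ : X → ℕ} (hσ : Measurable σ)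
    (hσF : ∀ x, (F x ∩ ball (denseSeq B (σ x)) ρ).Nonempty) :
    ∃ τ : X → ℕ, Measurable τ ∧ (∀ x, (F x ∩ ball (denseSeq B (τ x)) (ρ / 2)).Nonempty) ∧
      ∀ x, dist (denseSeq B (σ x)) (denseSeq B (τ x)) ≤ 2 * ρ := by
  classical
  have hex : ∀ x, ∃ n,
      (F x ∩ (ball (denseSeq B (σ x)) ρ ∩ ball (denseSeq B n) (ρ / 2))).Nonempty := fun x => by
    obtain ⟨y, hyF, hyσ⟩ := hσF x
    obtain ⟨n, hn⟩ := Metric.denseRange_iff.1 (denseRange_denseSeq B) y (ρ / 2) (half_pos hρ)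
    exact ⟨n, y, hyF, hyσ, mem_ball.2 hn⟩
  -- Taking the least admissible index is what keeps `τ` measurable.
  refine ⟨fun x => Nat.find (hex x), measurable_find hex fun n =>
    measurableSet_nonempty_inter_comp hF (U := fun k => ball (denseSeq B k) ρ ∩
      ball (denseSeq B n) (ρ / 2)) (fun _ => isOpen_ball.inter isOpen_ball) hσ,
    fun x => ?_, fun x => ?_⟩
  · obtain ⟨y, hyF, -, hy⟩ := Nat.find_spec (hex x)
    exact ⟨y, hyF, hy⟩
  · obtain ⟨y, -, hyσ, hy⟩ := Nat.find_spec (hex x)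
    calc dist (denseSeq B (σ x)) (denseSeq B (Nat.find (hex x)))
        ≤ dist (denseSeq B (σ x)) y + dist y (denseSeq B (Nat.find (hex x))) :=
          dist_triangle _ _ _
      _ ≤ ρ + ρ / 2 := add_le_add (mem_ball'.1 hyσ).le (mem_ball.1 hy).le
      _ ≤ 2 * ρ := by linarith

theorem exists_measurable_index_seq {r : ℝ} (hr : 0 < r) {σ : X → ℕ} (hσ : Measurable σ)
    (hσF : ∀ x, (F x ∩ ball (denseSeq B (σ x)) r).Nonempty) :
    ∃ τ : ℕ → X → ℕ, τ 0 = σ ∧ ∀ k, Measurable (τ k) ∧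
      (∀ x, (F x ∩ ball (denseSeq B (τ k x)) (r / 2 ^ k)).Nonempty) ∧
      ∀ x, dist (denseSeq B (τ k x)) (denseSeq B (τ (k + 1) x)) ≤ 4 * r / 2 / 2 ^ k := by
  choose! next hnext_meas hnext_mem hnext_dist using
    fun (ρ : ℝ) (hρ : 0 < ρ) (σ : X → ℕ) (hσ : Measurable σ) hσF =>
      exists_measurable_index_refine hF hρ hσ hσF
  let τ : ℕ → X → ℕ := fun k => Nat.rec (motive := fun _ => X → ℕ) σ
    (fun k τk => next (r / 2 ^ k) τk) k
  have hτ : ∀ k, Measurable (τ k) ∧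
      ∀ x, (F x ∩ ball (denseSeq B (τ k x)) (r / 2 ^ k)).Nonempty := by
    intro k
    induction k with
    | zero => simpa [τ] using ⟨hσ, hσF⟩
    | succ k ih =>
      have hρ : 0 < r / 2 ^ k := by positivity
      refine ⟨hnext_meas _ hρ _ ih.1 ih.2, ?_⟩
      simpa only [pow_succ, div_div] using hnext_mem _ hρ _ ih.1 ih.2
  refine ⟨τ, rfl, fun k => ⟨(hτ k).1, (hτ k).2, fun x => ?_⟩⟩
  calc dist (denseSeq B (τ k x)) (denseSeq B (τ (k + 1) x))
      ≤ 2 * (r / 2 ^ k) := hnext_dist _ (by positivity) _ (hτ k).1 (hτ k).2 x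
    _ = 4 * r / 2 / 2 ^ k := by ring

theorem exists_stronglyMeasurable_selection_near [CompleteSpace B]
    (hclosed : ∀ x, IsClosed (F x)) {r : ℝ} (hr : 0 < r) {σ : X → ℕ} (hσ : Measurable σ)
    (hσF : ∀ x, (F x ∩ ball (denseSeq B (σ x)) r).Nonempty) :
    ∃ f : X → B, StronglyMeasurable f ∧ ∀ x, f x ∈ F x ∧ dist (denseSeq B (σ x)) (f x) ≤ 4 * r := by
  obtain ⟨τ, rfl, hτ⟩ := exists_measurable_index_seq hF hr hσ hσF
  have hlim : ∀ x, Tendsto (fun k => denseSeq B (τ k x)) atTop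
      (𝓝 (limUnder atTop fun k => denseSeq B (τ k x))) := fun x =>
    (cauchySeq_of_le_geometric_two fun k => (hτ k).2.2 x).tendsto_limUnder
  refine ⟨fun x => limUnder atTop fun k => denseSeq B (τ k x),
    stronglyMeasurable_of_tendsto atTop (fun k => ?_) (tendsto_pi_nhds.2 hlim),
    fun x => ⟨?_, dist_le_of_le_geometric_two_of_tendsto₀ (fun k => (hτ k).2.2 x) (hlim x)⟩⟩
  · exact (continuous_of_discreteTopology (f := denseSeq B)).comp_stronglyMeasurable
      (hτ k).1.stronglyMeasurable
  · exact (hclosed x).mem_of_tendsto_of_inter_ball_nonempty (hlim x)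
      (tendsto_const_nhds.div_atTop (tendsto_pow_atTop_atTop_of_one_lt one_lt_two))
      fun k => (hτ k).2.1 x

theorem exists_dense_stronglyMeasurable_selections [CompleteSpace B]
    (hclosed : ∀ x, IsClosed (F x)) (hne : ∀ x, (F x).Nonempty) :
    ∃ f : ℕ × ℕ → X → B, (∀ q, StronglyMeasurable (f q)) ∧ (∀ q x, f q x ∈ F x) ∧
      ∀ x, F x ⊆ closure (range fun q => f q x) := by
  have hsel : ∀ q : ℕ × ℕ, ∃ f : X → B, StronglyMeasurable f ∧ ∀ x, f x ∈ F x ∧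
      ((F x ∩ ball (denseSeq B q.1) (1 / (q.2 + 1))).Nonempty →
        dist (denseSeq B q.1) (f x) ≤ 4 * (1 / (q.2 + 1))) := by
    rintro ⟨j, n⟩
    have hr : (0 : ℝ) < 1 / (n + 1) := Nat.one_div_pos_of_nat
    obtain ⟨σ, hσ, hσF, hσj⟩ := exists_measurable_index_start hF hne hr j
    obtain ⟨f, hf, hfF⟩ := exists_stronglyMeasurable_selection_near hF hclosed hr hσ hσF
    exact ⟨f, hf, fun x => ⟨(hfF x).1, fun h => hσj x h ▸ (hfF x).2⟩⟩
  choose f hf_meas hf using hsel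
  refine ⟨f, hf_meas, fun q x => (hf q x).1, fun x b hb => Metric.mem_closure_iff.2 fun ε hε => ?_⟩
  obtain ⟨n, hn⟩ := exists_nat_one_div_lt (by positivity : 0 < ε / 5)
  obtain ⟨j, hj⟩ := Metric.denseRange_iff.1 (denseRange_denseSeq B) b _
    (Nat.one_div_pos_of_nat (n := n))
  refine ⟨f (j, n) x, mem_range_self _, ?_⟩
  have hfj := (hf (j, n) x).2 ⟨b, hb, mem_ball.2 hj⟩
  calc dist b (f (j, n) x) ≤ dist b (denseSeq B j) + dist (denseSeq B j) (f (j, n) x) :=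
        dist_triangle _ _ _
    _ < 1 / (n + 1) + 4 * (1 / (n + 1)) := add_lt_add_of_lt_of_le hj hfj
    _ < ε := by linarith

end MeasurableSelection

theorem MeasureTheory.StronglyMeasurable.exists_cover_memLp_indicator {X E : Type*}
    [MeasurableSpace X] [NormedAddCommGroup E] {m : Measure X} [SigmaFinite m] (p : ℝ≥0∞)
    {f : X → E} (hf : StronglyMeasurable f) :
    ∃ s : ℕ → Set X, (∀ n, MemLp ((s n).indicator f) p m) ∧ ∀ x, ∃ n, x ∈ s n := by
  have hs : ∀ n : ℕ, MeasurableSet (spanningSets m n ∩ {x | ‖f x‖ ≤ n}) := fun n =>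
    (measurableSet_spanningSets m n).inter (hf.norm.measurable measurableSet_Iic)
  refine ⟨fun n => spanningSets m n ∩ {x | ‖f x‖ ≤ n}, fun n => ?_, fun x => ?_⟩
  · rw [memLp_indicator_iff_restrict (hs n)]
    have : IsFiniteMeasure (m.restrict (spanningSets m n ∩ {x | ‖f x‖ ≤ n})) :=
      isFiniteMeasure_restrict.2
        ((measure_mono inter_subset_left).trans_lt (measure_spanningSets_lt_top m n)).ne
    exact .of_bound hf.aestronglyMeasurable n
      ((ae_restrict_iff' (hs n)).2 (.of_forall fun x hx => hx.2))
  · refine ⟨max (spanningSetsIndex m x) ⌈‖f x‖⌉₊,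
      mem_spanningSets_of_index_le m x (le_max_left _ _), ?_⟩
    exact (Nat.le_ceil (‖f x‖)).trans (mod_cast le_max_right _ _)

namespace BanachBundle

variable {X B : Type*} [MeasurableSpace X] [NormedAddCommGroup B] [NormedSpace ℝ B]
  {m : Measure X} (E : BanachBundle X B)

theorem indicator_mem_fiber (s : Set X) {f : X → B} {x : X} (hx : f x ∈ E.fiber x) :
    s.indicator f x ∈ E.fiber x := by
  by_cases h : x ∈ s <;> simp [h, hx]

theorem toLp_mem_sections {p : ℝ≥0∞} [Fact (1 ≤ p)] {f : X → B} (hf : MemLp f p m)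
    (hfE : ∀ᵐ x ∂m, f x ∈ E.fiber x) : hf.toLp f ∈ E.sections m p := by
  filter_upwards [hf.coeFn_toLp, hfE] with x hx hfx
  rwa [hx]

theorem ae_parallelogram_of_sections
    (hHilb : ∀ v w : E.sections m 2,
      ‖v + w‖ ^ 2 + ‖v - w‖ ^ 2 = 2 * ‖v‖ ^ 2 + 2 * ‖w‖ ^ 2)
    {f g : X → B} (hf : MemLp f 2 m) (hg : MemLp g 2 m) (hfE : ∀ᵐ x ∂m, f x ∈ E.fiber x)
    (hgE : ∀ᵐ x ∂m, g x ∈ E.fiber x) :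
    ∀ᵐ x ∂m, ‖f x + g x‖ ^ 2 + ‖f x - g x‖ ^ 2 = 2 * ‖f x‖ ^ 2 + 2 * ‖g x‖ ^ 2 :=
  ae_parallelogram_of_forall_indicator hf hg fun s hs =>
    hHilb ⟨_, E.toLp_mem_sections (hf.indicator hs) (hfE.mono fun _ => E.indicator_mem_fiber s)⟩
      ⟨_, E.toLp_mem_sections (hg.indicator hs) (hgE.mono fun _ => E.indicator_mem_fiber s)⟩

theorem exists_dense_memLp_sections [CompleteSpace B] [SeparableSpace B] [SigmaFinite m] :
    ∃ f : (ℕ × ℕ) × ℕ → X → B, (∀ q, MemLp (f q) 2 m) ∧ (∀ q x, f q x ∈ E.fiber x) ∧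
      ∀ x, (E.fiber x : Set B) ⊆ closure (range fun q => f q x) := by
  obtain ⟨g, hg_meas, hgE, hg_dense⟩ := exists_dense_stronglyMeasurable_selections
    E.weaklyMeasurable E.isClosed_fiber fun x => ⟨0, (E.fiber x).zero_mem⟩
  choose s hs_memLp hs_cover using fun q => (hg_meas q).exists_cover_memLp_indicator (m := m) 2
  refine ⟨fun q => (s q.1 q.2).indicator (g q.1), fun q => hs_memLp q.1 q.2,
    fun q x => E.indicator_mem_fiber _ (hgE q.1 x), fun x => (hg_dense x).trans
      (closure_mono ?_)⟩
  rintro _ ⟨q, rfl⟩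
  obtain ⟨n, hn⟩ := hs_cover q x
  exact ⟨(q, n), indicator_of_mem hn _⟩

end BanachBundle

/-- If `B` is separable and the section space `Γ₂(E)` of a Banach `B`-bundle is a Hilbert
space (equivalently, satisfies the parallelogram law), then `m`-a.e. fiber `E(x)` is a
Hilbert space (i.e. satisfies the parallelogram law). -/
theorem ae_fiber_parallelogram_of_sections_hilbert
    {X B : Type*} [MeasurableSpace X] (m : Measure X) [SigmaFinite m]
    [NormedAddCommGroup B] [NormedSpace ℝ B] [CompleteSpace B]
    [TopologicalSpace.SeparableSpace B]
    (E : BanachBundle X B)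
    (hHilb : ∀ v w : E.sections m 2,
      ‖v + w‖ ^ 2 + ‖v - w‖ ^ 2 = 2 * ‖v‖ ^ 2 + 2 * ‖w‖ ^ 2) :
    ∀ᵐ x ∂m, ∀ a ∈ E.fiber x, ∀ b ∈ E.fiber x,
      ‖a + b‖ ^ 2 + ‖a - b‖ ^ 2 = 2 * ‖a‖ ^ 2 + 2 * ‖b‖ ^ 2 := by
  obtain ⟨f, hf, hfE, hdense⟩ := E.exists_dense_memLp_sections (m := m)
  have hpar : ∀ᵐ x ∂m, ∀ q q', ‖f q x + f q' x‖ ^ 2 + ‖f q x - f q' x‖ ^ 2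
      = 2 * ‖f q x‖ ^ 2 + 2 * ‖f q' x‖ ^ 2 := by
    simp only [ae_all_iff]
    exact fun q q' => E.ae_parallelogram_of_sections hHilb (hf q) (hf q')
      (.of_forall (hfE q)) (.of_forall (hfE q'))
  filter_upwards [hpar] with x hx a ha b hb
  refine parallelogram_of_mem_closure ?_ (hdense x ha) (hdense x hb)
  rintro _ ⟨q, rfl⟩ _ ⟨q', rfl⟩
  exact hx q q'
end

section
/- Let (X,Σ,m) be a σ-finite measure space, p ∈ (1,∞), and let M be an L^p(m)-Banach L^∞(m)-module with pointwise norm |·| : M → L^p(m). Define the pointwise modulus of convexity δ^pw_M(ε) ∈ L^∞(m) as the essential infimum (in the lattice-theoretic sense) of the family {1 - 1_E |(v+w)/2| : v,w ∈ M, E ∈ Σ, |v|=|w|=1 and |v-w|>ε m-a.e. on E}. Then for every ε ∈ (0,2], the Banach-space modulus of convexity satisfies δ_M(ε) ≤ ess inf_X δ^pw_M(ε). -/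
open MeasureTheory Filter
open scoped ENNReal

/-
Localize to a measurable set `F ⊆ E` of finite measure: multiplying `v, w` by `1_F` and dividing
by `m(F)^{1/p}` gives unit vectors at distance `≥ ε`, so the Banach modulus `δ = δ_M(ε)` yields
`∫_F |(v+w)/2|^p ≤ (1 - δ)^p m(F)`. As `m` is σ-finite, this for all such `F` forces
`|(v+w)/2| ≤ 1 - δ` a.e. on `E`; thus the constant `δ` is an a.e. lower bound of the family, so
`δ ≤ δ^pw_M(ε)` a.e. by maximality. The family contains the constant `1`, so `δ^pw_M(ε)` is
a.e. bounded above and its essential infimum is a genuine one.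
-/

/-- A module structure over `L^∞(m)` on a real normed space `M`, encoded via a scalar
multiplication map `smul : L^∞(m) → M → M`; multiplication in `L^∞(m)` and constants are
expressed via a.e. representatives. -/
structure LinftyModuleStruct {X : Type*} [MeasurableSpace X] (m : Measure X)
    (M : Type*) [NormedAddCommGroup M] [Module ℝ M] where
  smul : Lp ℝ ∞ m → M → M
  smul_add : ∀ (f : Lp ℝ ∞ m) (u v : M), smul f (u + v) = smul f u + smul f v
  add_smul : ∀ (f g : Lp ℝ ∞ m) (v : M), smul (f + g) v = smul f v + smul g v
  mul_smul : ∀ (f g h : Lp ℝ ∞ m) (v : M),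
    ((h : X → ℝ) =ᵐ[m] fun x => f x * g x) → smul h v = smul f (smul g v)
  const_smul : ∀ (f : Lp ℝ ∞ m) (c : ℝ) (v : M),
    ((f : X → ℝ) =ᵐ[m] fun _ => c) → smul f v = c • v

/-- `pn` is an `L^p(m)`-pointwise norm on the `L^∞(m)`-module `M` inducing the norm of `M`. -/
structure IsPointwiseNorm {X : Type*} [MeasurableSpace X] (m : Measure X) (p : ℝ)
    {M : Type*} [NormedAddCommGroup M] [Module ℝ M]
    (A : LinftyModuleStruct m M) (pn : M → X → ℝ) : Prop where
  memLp : ∀ v : M, MemLp (pn v) (ENNReal.ofReal p) m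
  nonneg : ∀ v : M, ∀ᵐ x ∂m, 0 ≤ pn v x
  eq_zero_iff : ∀ v : M, (pn v =ᵐ[m] 0) ↔ v = 0
  triangle : ∀ v w : M, ∀ᵐ x ∂m, pn (v + w) x ≤ pn v x + pn w x
  smul_eq : ∀ (f : Lp ℝ ∞ m) (v : M), pn (A.smul f v) =ᵐ[m] fun x => |f x| * pn v x
  norm_eq : ∀ v : M, ‖v‖ = (∫ x, pn v x ^ p ∂m) ^ (1 / p)

/-- The modulus of convexity of a normed space `V`. -/
noncomputable def modulusOfConvexity (V : Type*) [NormedAddCommGroup V] [Module ℝ V]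
    (ε : ℝ) : ℝ :=
  sInf {r : ℝ | ∃ v w : V, ‖v‖ = 1 ∧ ‖w‖ = 1 ∧ ε ≤ ‖v - w‖ ∧ r = 1 - ‖(2 : ℝ)⁻¹ • (v + w)‖}

/-- The defining family of the pointwise modulus of convexity `δ^pw_M(ε)`: the functions
`1 - 1_E·|(v+w)/2|` over all `v, w ∈ M` and measurable `E` with `|v| = |w| = 1` and
`|v - w| > ε` a.e. on `E`. -/
def pwModulusFamily {X : Type*} [MeasurableSpace X] (m : Measure X) (p : ℝ)
    {M : Type*} [NormedAddCommGroup M] [Module ℝ M]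
    (A : LinftyModuleStruct m M) (pn : M → X → ℝ) (ε : ℝ) : Set (X → ℝ) :=
  {u | ∃ (v w : M) (E : Set X), MeasurableSet E ∧
    (∀ᵐ x ∂m, x ∈ E → pn v x = 1 ∧ pn w x = 1 ∧ ε < pn (v - w) x) ∧
    u = fun x => 1 - E.indicator (fun _ => (1 : ℝ)) x * pn ((2 : ℝ)⁻¹ • (v + w)) x}

section SetIntegral

variable {α : Type*} [MeasurableSpace α] {μ : Measure α}

theorem setIntegral_ge_of_ae_const_le_real {f : α → ℝ} {c : ℝ} {s : Set α}
    (hs : MeasurableSet s) (hμs : μ s ≠ ∞) (hf : ∀ᵐ x ∂μ, x ∈ s → c ≤ f x)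
    (hfint : IntegrableOn f s μ) : c * μ.real s ≤ ∫ x in s, f x ∂μ := by
  rw [mul_comm, ← smul_eq_mul, ← setIntegral_const]
  exact setIntegral_mono_ae_restrict (integrableOn_const hμs) hfint ((ae_restrict_iff' hs).2 hf)

theorem ae_le_const_of_forall_setIntegral_le [SigmaFinite μ] {f : α → ℝ} {c : ℝ} {E : Set α}
    (hE : MeasurableSet E) (hf : ∀ s, MeasurableSet s → μ s < ∞ → IntegrableOn f s μ)
    (h : ∀ F ⊆ E, MeasurableSet F → μ F < ∞ → ∫ x in F, f x ∂μ ≤ c * μ.real F) :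
    ∀ᵐ x ∂μ, x ∈ E → f x ≤ c := by
  have hnonneg : 0 ≤ᵐ[μ] E.indicator fun x => c - f x := by
    refine ae_nonneg_of_forall_setIntegral_nonneg_of_sigmaFinite
      (fun s hs hμs => ((integrableOn_const hμs.ne).sub (hf s hs hμs)).indicator hE)
      (fun s hs hμs => ?_)
    have hμsE : μ (s ∩ E) < ∞ := (measure_mono Set.inter_subset_left).trans_lt hμs
    rw [setIntegral_indicator hE, integral_sub (integrableOn_const (C := c) hμsE.ne)
      (hf _ (hs.inter hE) hμsE), setIntegral_const, smul_eq_mul, mul_comm, sub_nonneg]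
    exact h _ Set.inter_subset_right (hs.inter hE) hμsE
  filter_upwards [hnonneg] with x hx hxE
  simpa [Set.indicator_of_mem hxE] using hx

end SetIntegral

section NormedSpace

variable {V : Type*} [NormedAddCommGroup V] [NormedSpace ℝ V] {ε : ℝ}

theorem modulusOfConvexity_bddBelow (ε : ℝ) :
    BddBelow {r : ℝ | ∃ v w : V, ‖v‖ = 1 ∧ ‖w‖ = 1 ∧ ε ≤ ‖v - w‖ ∧
      r = 1 - ‖(2 : ℝ)⁻¹ • (v + w)‖} := by
  refine ⟨0, ?_⟩
  rintro _ ⟨v, w, hv, hw, -, rfl⟩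
  have := norm_add_le v w
  rw [sub_nonneg, norm_smul, Real.norm_of_nonneg (by norm_num)]
  linarith

theorem modulusOfConvexity_le {v w : V} (hv : ‖v‖ = 1) (hw : ‖w‖ = 1) (hvw : ε ≤ ‖v - w‖) :
    modulusOfConvexity V ε ≤ 1 - ‖(2 : ℝ)⁻¹ • (v + w)‖ :=
  csInf_le (modulusOfConvexity_bddBelow ε) ⟨v, w, hv, hw, hvw, rfl⟩

theorem modulusOfConvexity_le_one (ε : ℝ) : modulusOfConvexity V ε ≤ 1 := by
  rcases Set.eq_empty_or_nonempty {r : ℝ | ∃ v w : V, ‖v‖ = 1 ∧ ‖w‖ = 1 ∧ ε ≤ ‖v - w‖ ∧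
      r = 1 - ‖(2 : ℝ)⁻¹ • (v + w)‖} with hempty | ⟨_, v, w, hv, hw, hvw, rfl⟩
  · rw [modulusOfConvexity, hempty, Real.sInf_empty]
    exact zero_le_one
  · exact (modulusOfConvexity_le hv hw hvw).trans (sub_le_self _ (norm_nonneg _))

theorem norm_midpoint_le_of_norm_eq {v w : V} {r : ℝ} (hv : ‖v‖ = r) (hw : ‖w‖ = r)
    (hvw : ε * r ≤ ‖v - w‖) :
    ‖(2 : ℝ)⁻¹ • (v + w)‖ ≤ (1 - modulusOfConvexity V ε) * r := by
  obtain hr | hr := (hv ▸ norm_nonneg v : 0 ≤ r).eq_or_lt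
  · rw [← hr, norm_eq_zero] at hv hw
    simp [hv, hw, ← hr]
  have hunit : ∀ z : V, ‖z‖ = r → ‖r⁻¹ • z‖ = 1 := fun z hz => by
    rw [norm_smul, hz, Real.norm_of_nonneg (inv_nonneg.2 hr.le), inv_mul_cancel₀ hr.ne']
  have hsep : ε ≤ ‖r⁻¹ • v - r⁻¹ • w‖ := by
    rwa [← smul_sub, norm_smul, Real.norm_of_nonneg (inv_nonneg.2 hr.le), le_inv_mul_iff₀ hr,
      mul_comm]
  have hδ := modulusOfConvexity_le (hunit v hv) (hunit w hw) hsep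
  rw [← smul_add, smul_comm, norm_smul, Real.norm_of_nonneg (inv_nonneg.2 hr.le)] at hδ
  rw [← div_le_iff₀ hr, div_eq_inv_mul]
  linarith

omit [NormedSpace ℝ V] in
theorem modulusOfConvexity_of_subsingleton [Module ℝ V] [Subsingleton V] (ε : ℝ) :
    modulusOfConvexity V ε = 0 := by
  have hempty : {r : ℝ | ∃ v w : V, ‖v‖ = 1 ∧ ‖w‖ = 1 ∧ ε ≤ ‖v - w‖ ∧
      r = 1 - ‖(2 : ℝ)⁻¹ • (v + w)‖} = ∅ :=
    Set.eq_empty_of_forall_notMem fun _ ⟨v, _, hv, _⟩ => by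
      simp [Subsingleton.elim v 0] at hv
  rw [modulusOfConvexity, hempty, Real.sInf_empty]

end NormedSpace

namespace LinftyModuleStruct

variable {X : Type*} [MeasurableSpace X] {m : Measure X}
  {M : Type*} [NormedAddCommGroup M] [Module ℝ M] (A : LinftyModuleStruct m M)

theorem smul_sub (f : Lp ℝ ∞ m) (v w : M) : A.smul f (v - w) = A.smul f v - A.smul f w :=
  eq_sub_of_add_eq (by rw [← A.smul_add, sub_add_cancel])

theorem exists_smul_eq_real_smul (c : ℝ) :
    ∃ k : Lp ℝ ∞ m, (k : X → ℝ) =ᵐ[m] (fun _ => c) ∧ ∀ z : M, A.smul k z = c • z :=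
  ⟨_, (memLp_top_const c).coeFn_toLp, fun z => A.const_smul _ c z (memLp_top_const c).coeFn_toLp⟩

theorem smul_real_smul (f : Lp ℝ ∞ m) (c : ℝ) (z : M) : A.smul f (c • z) = c • A.smul f z := by
  obtain ⟨k, hk, hkz⟩ := A.exists_smul_eq_real_smul c
  have hcf : ((c • f : Lp ℝ ∞ m) : X → ℝ) =ᵐ[m] fun x => c * f x := Lp.coeFn_smul c f
  -- `c • f` is both `k * f` and `f * k` in `L^∞(m)`
  have hkf : A.smul (c • f) z = A.smul k (A.smul f z) :=
    A.mul_smul k f _ z (by filter_upwards [hcf, hk] with x hx hkx; rw [hx, hkx])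
  have hfk : A.smul (c • f) z = A.smul f (A.smul k z) :=
    A.mul_smul f k _ z (by filter_upwards [hcf, hk] with x hx hkx; rw [hx, hkx, mul_comm])
  rw [← hkz, ← hfk, hkf, hkz]

end LinftyModuleStruct

namespace IsPointwiseNorm

variable {X : Type*} [MeasurableSpace X] {m : Measure X}
  {M : Type*} [NormedAddCommGroup M] [Module ℝ M] {p : ℝ} {A : LinftyModuleStruct m M}
  {pn : M → X → ℝ} (hpn : IsPointwiseNorm m p A pn)
include hpn

theorem pn_smul (c : ℝ) (z : M) : pn (c • z) =ᵐ[m] fun x => |c| * pn z x := by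
  obtain ⟨k, hk, hkz⟩ := A.exists_smul_eq_real_smul c
  filter_upwards [hkz z ▸ hpn.smul_eq k z, hk] with x hx hkx
  rw [hx, hkx]

theorem rpow_nonneg_ae (z : M) : 0 ≤ᵐ[m] fun x => pn z x ^ p :=
  (hpn.nonneg z).mono fun _ hx => Real.rpow_nonneg hx p

theorem integrable_rpow (hp : 0 < p) (z : M) : Integrable (fun x => pn z x ^ p) m := by
  have h := (hpn.memLp z).integrable_norm_rpow (ENNReal.ofReal_pos.2 hp).ne' ENNReal.ofReal_ne_top
  rw [ENNReal.toReal_ofReal hp.le] at h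
  refine h.congr ?_
  filter_upwards [hpn.nonneg z] with x hx
  rw [Real.norm_of_nonneg hx]

theorem norm_smul (hp : p ≠ 0) (c : ℝ) (z : M) : ‖c • z‖ = |c| * ‖z‖ := by
  have hint : ∫ x, pn (c • z) x ^ p ∂m = |c| ^ p * ∫ x, pn z x ^ p ∂m := by
    rw [← integral_const_mul]
    refine integral_congr_ae ?_
    filter_upwards [hpn.pn_smul c z, hpn.nonneg z] with x hx hx0
    rw [hx, Real.mul_rpow (abs_nonneg c) hx0]
  rw [hpn.norm_eq, hpn.norm_eq z, hint,
    Real.mul_rpow (Real.rpow_nonneg (abs_nonneg c) p)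
      (integral_nonneg_of_ae (hpn.rpow_nonneg_ae z)),
    one_div, Real.rpow_rpow_inv (abs_nonneg c) hp]

abbrev normedSpace (hp : p ≠ 0) : NormedSpace ℝ M where
  norm_smul_le c z := (hpn.norm_smul hp c z).le

theorem norm_smul_indicatorConstLp (hp : 0 < p) {F : Set X} (hF : MeasurableSet F)
    (hμF : m F ≠ ∞) (z : M) :
    ‖A.smul (indicatorConstLp ∞ hF hμF (1 : ℝ)) z‖ = (∫ x in F, pn z x ^ p ∂m) ^ (1 / p) := by
  rw [hpn.norm_eq, ← integral_indicator hF]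
  congr 1
  refine integral_congr_ae ?_
  filter_upwards [hpn.smul_eq (indicatorConstLp ∞ hF hμF (1 : ℝ)) z,
    indicatorConstLp_coeFn (p := ∞) (hs := hF) (hμs := hμF) (c := (1 : ℝ))]
    with x hx h1x
  by_cases hxF : x ∈ F
  · simp [hx, h1x, hxF]
  · simp [hx, h1x, hxF, Real.zero_rpow hp.ne']

theorem setIntegral_midpoint_rpow_le (hp : 0 < p) {ε : ℝ} (hε : 0 ≤ ε) {v w : M} {F : Set X}
    (hF : MeasurableSet F) (hμF : m F ≠ ∞)
    (hvw : ∀ᵐ x ∂m, x ∈ F → pn v x = 1 ∧ pn w x = 1 ∧ ε < pn (v - w) x) :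
    ∫ x in F, pn ((2 : ℝ)⁻¹ • (v + w)) x ^ p ∂m ≤ (1 - modulusOfConvexity M ε) ^ p * m.real F := by
  let _ : NormedSpace ℝ M := hpn.normedSpace hp.ne'
  set S := A.smul (indicatorConstLp ∞ hF hμF (1 : ℝ))
  have hS := hpn.norm_smul_indicatorConstLp hp hF hμF
  have hintegral_nonneg : ∀ z, 0 ≤ ∫ x in F, pn z x ^ p ∂m := fun z =>
    integral_nonneg_of_ae (ae_restrict_of_ae (hpn.rpow_nonneg_ae z))
  have hnorm_unit : ∀ z, (∀ᵐ x ∂m, x ∈ F → pn z x = 1) → ‖S z‖ = m.real F ^ (1 / p) := by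
    intro z hz
    rw [hS, setIntegral_congr_ae hF (hz.mono fun x hx hxF => by rw [hx hxF, Real.one_rpow]),
      setIntegral_const, smul_eq_mul, mul_one]
  have hsep : ε * m.real F ^ (1 / p) ≤ ‖S v - S w‖ := by
    rw [← A.smul_sub, hS, one_div, Real.le_rpow_inv_iff_of_pos (by positivity)
      (hintegral_nonneg _) hp, Real.mul_rpow hε (by positivity),
      Real.rpow_inv_rpow measureReal_nonneg hp.ne']
    exact setIntegral_ge_of_ae_const_le_real hF hμF
      (hvw.mono fun x hx hxF => Real.rpow_le_rpow hε (hx hxF).2.2.le hp.le)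
      (hpn.integrable_rpow hp _).integrableOn
  have hmid := norm_midpoint_le_of_norm_eq (hnorm_unit v (hvw.mono fun x hx hxF => (hx hxF).1))
    (hnorm_unit w (hvw.mono fun x hx hxF => (hx hxF).2.1)) hsep
  rwa [← A.smul_add, ← A.smul_real_smul, hS, one_div, Real.rpow_inv_le_iff_of_pos
    (hintegral_nonneg _) (by have := modulusOfConvexity_le_one (V := M) ε; positivity) hp,
    Real.mul_rpow (sub_nonneg.2 (modulusOfConvexity_le_one ε)) (by positivity),
    Real.rpow_inv_rpow measureReal_nonneg hp.ne'] at hmid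

theorem modulusOfConvexity_le_of_mem_pwModulusFamily [SigmaFinite m] (hp : 0 < p) {ε : ℝ}
    (hε : 0 ≤ ε) {u : X → ℝ} (hu : u ∈ pwModulusFamily m p A pn ε) :
    ∀ᵐ x ∂m, modulusOfConvexity M ε ≤ u x := by
  obtain ⟨v, w, E, hE, hvw, rfl⟩ := hu
  let _ : NormedSpace ℝ M := hpn.normedSpace hp.ne'
  have hδ : modulusOfConvexity M ε ≤ 1 := modulusOfConvexity_le_one ε
  have hpow : ∀ᵐ x ∂m, x ∈ E →
      pn ((2 : ℝ)⁻¹ • (v + w)) x ^ p ≤ (1 - modulusOfConvexity M ε) ^ p :=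
    ae_le_const_of_forall_setIntegral_le hE (fun _ _ _ => (hpn.integrable_rpow hp _).integrableOn)
      fun F hFE hF hμF => hpn.setIntegral_midpoint_rpow_le hp hε hF hμF.ne
        (hvw.mono fun x hx hxF => hx (hFE hxF))
  filter_upwards [hpow, hpn.nonneg ((2 : ℝ)⁻¹ • (v + w))] with x hx hx0
  by_cases hxE : x ∈ E
  · have := (Real.rpow_le_rpow_iff hx0 (sub_nonneg.2 hδ) hp).1 (hx hxE)
    simp only [Set.indicator_of_mem hxE, one_mul]
    linarith
  · simpa [Set.indicator_of_notMem hxE] using hδ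

end IsPointwiseNorm

theorem IsPointwiseNorm.subsingleton {X : Type*} [MeasurableSpace X] {M : Type*}
    [NormedAddCommGroup M] [Module ℝ M] {p : ℝ} {A : LinftyModuleStruct (0 : Measure X) M}
    {pn : M → X → ℝ} (hpn : IsPointwiseNorm 0 p A pn) : Subsingleton M :=
  subsingleton_of_forall_eq 0 fun z => (hpn.eq_zero_iff z).1 (by simp [EventuallyEq])

theorem one_mem_pwModulusFamily {X : Type*} [MeasurableSpace X] {m : Measure X} {p : ℝ}
    {M : Type*} [NormedAddCommGroup M] [Module ℝ M] {A : LinftyModuleStruct m M}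
    {pn : M → X → ℝ} {ε : ℝ} : (fun _ => 1) ∈ pwModulusFamily m p A pn ε :=
  ⟨0, 0, ∅, MeasurableSet.empty, by simp, by simp⟩

-- `essInf` over the zero measure is `sSup univ`, the junk value `0` in `ℝ`.
theorem Real.essInf_zero_measure {α : Type*} [MeasurableSpace α] (f : α → ℝ) :
    essInf f (0 : Measure α) = 0 := by
  simp [essInf, Filter.liminf_eq]

theorem modulus_le_essInf_pointwise_modulus_general
    {X : Type*} [MeasurableSpace X] (m : Measure X) [SigmaFinite m]
    {M : Type*} [NormedAddCommGroup M] [Module ℝ M]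
    (p : ℝ) (hp : 1 < p)
    (A : LinftyModuleStruct m M) (pn : M → X → ℝ) (hpn : IsPointwiseNorm m p A pn)
    (ε : ℝ) (hε : ε ∈ Set.Ioc (0 : ℝ) 2)
    (g : X → ℝ)
    (hg_lb : ∀ u ∈ pwModulusFamily m p A pn ε, ∀ᵐ x ∂m, g x ≤ u x)
    (hg_max : ∀ h : X → ℝ, (∀ u ∈ pwModulusFamily m p A pn ε, ∀ᵐ x ∂m, h x ≤ u x) →
      ∀ᵐ x ∂m, h x ≤ g x) :
    modulusOfConvexity M ε ≤ essInf g m := by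
  obtain ⟨hε0, -⟩ := hε
  rcases eq_zero_or_neZero m with rfl | _
  · have := hpn.subsingleton
    rw [modulusOfConvexity_of_subsingleton, Real.essInf_zero_measure]
  · have hδ_le_g : ∀ᵐ x ∂m, modulusOfConvexity M ε ≤ g x :=
      hg_max _ fun _ hu =>
        hpn.modulusOfConvexity_le_of_mem_pwModulusFamily (by linarith) hε0.le hu
    have hg_le_one : ∀ᵐ x ∂m, g x ≤ 1 := hg_lb _ one_mem_pwModulusFamily
    exact le_essInf_of_ae_le _ hδ_le_g (isCoboundedUnder_ge_of_eventually_le _ hg_le_one)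

/-- If `g` is the pointwise modulus of convexity `δ^pw_M(ε)` of an `L^p(m)`-Banach
`L^∞(m)`-module `M` (i.e. the largest a.e. lower bound of the defining family), then the
Banach-space modulus of convexity satisfies `δ_M(ε) ≤ ess inf g`. -/
theorem modulus_le_essInf_pointwise_modulus
    {X : Type*} [MeasurableSpace X] (m : Measure X) [SigmaFinite m]
    {M : Type*} [NormedAddCommGroup M] [Module ℝ M] [CompleteSpace M]
    (p : ℝ) (hp : 1 < p)
    (A : LinftyModuleStruct m M) (pn : M → X → ℝ) (hpn : IsPointwiseNorm m p A pn)
    (ε : ℝ) (hε : ε ∈ Set.Ioc (0 : ℝ) 2)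
    (g : X → ℝ)
    (hg_lb : ∀ u ∈ pwModulusFamily m p A pn ε, ∀ᵐ x ∂m, g x ≤ u x)
    (hg_max : ∀ h : X → ℝ, (∀ u ∈ pwModulusFamily m p A pn ε, ∀ᵐ x ∂m, h x ≤ u x) →
      ∀ᵐ x ∂m, h x ≤ g x) :
    modulusOfConvexity M ε ≤ essInf g m :=
  modulus_le_essInf_pointwise_modulus_general m p hp A pn hpn ε hε g hg_lb hg_max
end

section
/- Let (X,Σ,m) be a σ-finite measure space, B a separable Banach space, and E a Banach B-bundle over X. For ω ∈ Γ₀(E'_{w*}), the module-theoretic pointwise norm |ω| := ⋁{⟨ω̄(·), v̄(·)⟩ : v̄ a strongly measurable section of E with ‖v̄(·)‖_B ≤ 1} coincides m-a.e. with the function x ↦ ‖ω̄(x)‖_{E(x)'}, for any representative ω̄ of ω. -/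
open MeasureTheory
open scoped ENNReal

/-- A weakly* measurable section of the dual bundle `x ↦ E(x)'`: a choice of a continuous
functional on each fiber whose pairing with every strongly measurable section of `E` is
measurable. -/
def IsWeakStarMeasurableSection {X B : Type*} [MeasurableSpace X]
    [NormedAddCommGroup B] [NormedSpace ℝ B] (m : Measure X) (E : BanachBundle X B)
    (ω : ∀ x, ↥(E.fiber x) →L[ℝ] ℝ) : Prop :=
  ∀ (v : X → B) (hv : ∀ x, v x ∈ E.fiber x), MeasureTheory.StronglyMeasurable v →
    Measurable fun x => ω x ⟨v x, hv x⟩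

open Metric Filter Topology


section Castaing

variable {X B : Type*} [MeasurableSpace X] [NormedAddCommGroup B]
  [MeasurableSpace B] [BorelSpace B]

private lemma measurableSet_comp_nat {φ : X → ℕ}
    (hφ : Measurable φ) {S : ℕ → Set X} (hS : ∀ p, MeasurableSet (S p)) :
    MeasurableSet {x | x ∈ S (φ x)} := by
  have h : {x | x ∈ S (φ x)} = ⋃ p : ℕ, (φ ⁻¹' {p}) ∩ S p := by
    ext x
    simp only [Set.mem_setOf_eq, Set.mem_iUnion, Set.mem_inter_iff, Set.mem_preimage,
      Set.mem_singleton_iff]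
    constructor
    · intro h; exact ⟨φ x, rfl, h⟩
    · rintro ⟨p, hp, h⟩; rwa [hp]
  rw [h]
  exact MeasurableSet.iUnion fun p => (hφ (measurableSet_singleton p)).inter (hS p)

private lemma exists_selection_near [CompleteSpace B]
    (F : X → Set B) (hne : ∀ x, (F x).Nonempty) (hcl : ∀ x, IsClosed (F x))
    (b : ℕ → B) (hb : DenseRange b)
    (hD : ∀ n, Measurable fun x => infDist (b n) (F x))
    (n₀ : ℕ) {ε : ℝ} (hε : 0 < ε) :
    ∃ s : X → B, Measurable s ∧ (∀ x, s x ∈ F x) ∧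
      ∀ x, dist (s x) (b n₀) ≤ infDist (b n₀) (F x) + 3 * ε := by
  classical
  have hex : ∀ (x : X) (j p : ℕ), ∃ n, infDist (b n) (F x) < ε * (1/2) ^ (j+1) ∧
      dist (b n) (b p) < infDist (b p) (F x) + ε * (1/2) ^ (j+1) := by
    intro x j p
    set δ : ℝ := ε * (1/2) ^ (j+1) with hδdef
    have hδ : 0 < δ := by positivity
    have h1 : infDist (b p) (F x) < infDist (b p) (F x) + δ/2 := by linarith
    obtain ⟨y, hyF, hy⟩ := (infDist_lt_iff (hne x)).1 h1
    obtain ⟨n, hn⟩ := hb.exists_dist_lt y (half_pos hδ)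
    refine ⟨n, ?_, ?_⟩
    · calc infDist (b n) (F x) ≤ dist (b n) y := infDist_le_dist_of_mem hyF
        _ < δ := by rw [dist_comm]; linarith
    · calc dist (b n) (b p) ≤ dist (b n) y + dist y (b p) := dist_triangle _ _ _
        _ < δ/2 + (infDist (b p) (F x) + δ/2) := by
            have h3 : dist (b n) y = dist y (b n) := dist_comm _ _
            have h4 : dist y (b p) = dist (b p) y := dist_comm _ _
            rw [h3, h4]
            exact add_lt_add hn hy
        _ = infDist (b p) (F x) + δ := by ring
  set ψ : ℕ → X → ℕ := fun j =>
    Nat.rec (fun _ => n₀) (fun j ih x => Nat.find (hex x j (ih x))) j with hψdef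
  have hψ0 : ∀ x, ψ 0 x = n₀ := fun _ => rfl
  have hψsucc : ∀ j x, ψ (j+1) x = Nat.find (hex x j (ψ j x)) := fun _ _ => rfl
  have hψm : ∀ j, Measurable (ψ j) := by
    intro j
    induction j with
    | zero => exact measurable_const
    | succ j ih =>
      have hp : ∀ x : X, ∃ n, infDist (b n) (F x) < ε * (1/2) ^ (j+1) ∧
          dist (b n) (b (ψ j x)) < infDist (b (ψ j x)) (F x) + ε * (1/2) ^ (j+1) :=
        fun x => hex x j (ψ j x)
      have : Measurable fun x => Nat.find (hp x) := by
        refine measurable_find hp fun k => ?_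
        have hA : MeasurableSet {x : X | infDist (b k) (F x) < ε * (1/2) ^ (j+1)} :=
          measurableSet_lt (hD k) measurable_const
        have hB : MeasurableSet {x : X |
            dist (b k) (b (ψ j x)) < infDist (b (ψ j x)) (F x) + ε * (1/2) ^ (j+1)} :=
          measurableSet_comp_nat ih
            (S := fun p => {x : X | dist (b k) (b p) < infDist (b p) (F x) + ε * (1/2) ^ (j+1)})
            (fun p => measurableSet_lt measurable_const ((hD p).add measurable_const))
        have : {x : X | infDist (b k) (F x) < ε * (1/2) ^ (j+1) ∧
            dist (b k) (b (ψ j x)) < infDist (b (ψ j x)) (F x) + ε * (1/2) ^ (j+1)}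
            = _ ∩ _ := Set.setOf_and
        rw [this]
        exact hA.inter hB
      exact this
  have hinv : ∀ x j, infDist (b (ψ (j+1) x)) (F x) < ε * (1/2) ^ (j+1) ∧
      dist (b (ψ (j+1) x)) (b (ψ j x)) < infDist (b (ψ j x)) (F x) + ε * (1/2) ^ (j+1) :=
    fun x j => Nat.find_spec (hex x j (ψ j x))
  -- geometric bound for the shifted sequence
  have hstep : ∀ x j, dist (b (ψ (j+1) x)) (b (ψ (j+2) x)) ≤ (3*ε/4) * (1/2) ^ j := by
    intro x j
    have h1 := (hinv x j).1
    have h2 := (hinv x (j+1)).2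
    rw [dist_comm]
    refine le_of_lt ?_
    calc dist (b (ψ (j+2) x)) (b (ψ (j+1) x))
        < infDist (b (ψ (j+1) x)) (F x) + ε * (1/2) ^ (j+2) := h2
      _ ≤ ε * (1/2) ^ (j+1) + ε * (1/2) ^ (j+2) := by linarith
      _ = (3*ε/4) * (1/2) ^ j := by ring

  have hcau : ∀ x, CauchySeq (fun j => b (ψ (j+1) x)) :=
    fun x => cauchySeq_of_le_geometric (1/2) (3*ε/4) (by norm_num) (hstep x)
  have hlim : ∀ x, ∃ a : B, Tendsto (fun j => b (ψ (j+1) x)) atTop (𝓝 a) :=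
    fun x => cauchySeq_tendsto_of_complete (hcau x)
  choose s hs using hlim
  have hsm : Measurable s := by
    refine measurable_of_tendsto_metrizable
      (f := fun j x => b (ψ (j+1) x)) (fun j => ?_) (tendsto_pi_nhds.2 hs)
    exact (measurable_from_top (f := b)).comp (hψm (j+1))
  have hdist0 : ∀ x, Tendsto (fun j => dist (s x) (b (ψ (j+1) x))) atTop (𝓝 0) := by
    intro x
    have := tendsto_iff_dist_tendsto_zero.1 (hs x)
    simpa [dist_comm] using this
  refine ⟨s, hsm, ?_, ?_⟩
  · intro x
    rw [(hcl x).mem_iff_infDist_zero (hne x)]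
    refine le_antisymm ?_ infDist_nonneg
    have hle : ∀ j : ℕ, infDist (s x) (F x) ≤
        ε * (1/2) ^ (j+1) + dist (s x) (b (ψ (j+1) x)) := by
      intro j
      calc infDist (s x) (F x)
          ≤ infDist (b (ψ (j+1) x)) (F x) + dist (s x) (b (ψ (j+1) x)) :=
            infDist_le_infDist_add_dist
        _ ≤ ε * (1/2) ^ (j+1) + dist (s x) (b (ψ (j+1) x)) := by
            have := (hinv x j).1; linarith
    have htend : Tendsto (fun j : ℕ => ε * (1/2) ^ (j+1) + dist (s x) (b (ψ (j+1) x)))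
        atTop (𝓝 (0 + 0)) := by
      refine Tendsto.add ?_ (hdist0 x)
      have h2 : Tendsto (fun j : ℕ => (1/2 : ℝ) ^ (j+1)) atTop (𝓝 0) :=
        (tendsto_pow_atTop_nhds_zero_of_lt_one (by norm_num) (by norm_num)).comp
          (tendsto_add_atTop_nat 1)
      simpa using h2.const_mul ε
    rw [add_zero] at htend
    exact ge_of_tendsto' htend hle
  · intro x
    have h1 : dist (b (ψ 1 x)) (s x) ≤ (3*ε/4) / (1 - 1/2) :=
      dist_le_of_le_geometric_of_tendsto₀ (1/2) (3*ε/4) (by norm_num) (hstep x) (hs x)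
    have h2 : dist (b (ψ 1 x)) (b n₀) ≤ infDist (b n₀) (F x) + ε * (1/2) ^ 1 := by
      have := (hinv x 0).2
      rw [hψ0 x] at this
      exact this.le
    calc dist (s x) (b n₀) ≤ dist (s x) (b (ψ 1 x)) + dist (b (ψ 1 x)) (b n₀) :=
          dist_triangle _ _ _
      _ ≤ (3*ε/4) / (1 - 1/2) + (infDist (b n₀) (F x) + ε * (1/2) ^ 1) := by
          rw [dist_comm (s x)]
          linarith
      _ ≤ infDist (b n₀) (F x) + 3 * ε := by norm_num; linarith

private lemma exists_castaing [CompleteSpace B]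
    [TopologicalSpace.SeparableSpace B]
    (F : X → Set B) (hne : ∀ x, (F x).Nonempty) (hcl : ∀ x, IsClosed (F x))
    (hwm : ∀ U : Set B, IsOpen U → MeasurableSet {x | (F x ∩ U).Nonempty}) :
    ∃ s : ℕ → X → B, (∀ k, Measurable (s k)) ∧ (∀ k x, s k x ∈ F x) ∧
      ∀ x, ∀ v ∈ F x, ∀ ε : ℝ, 0 < ε → ∃ k, dist (s k x) v < ε := by
  haveI : Nonempty B := ⟨0⟩
  obtain ⟨b, hb⟩ := TopologicalSpace.exists_dense_seq B
  have hD : ∀ n, Measurable fun x => infDist (b n) (F x) := by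
    intro n
    refine measurable_of_Iio fun r => ?_
    have : (fun x => infDist (b n) (F x)) ⁻¹' Set.Iio r
        = {x | (F x ∩ ball (b n) r).Nonempty} := by
      ext x
      simp only [Set.mem_preimage, Set.mem_Iio, Set.mem_setOf_eq]
      rw [infDist_lt_iff (hne x)]
      constructor
      · rintro ⟨y, hyF, hy⟩
        exact ⟨y, hyF, by rwa [mem_ball, dist_comm]⟩
      · rintro ⟨y, hyF, hy⟩
        exact ⟨y, hyF, by rwa [mem_ball, dist_comm] at hy⟩
    rw [this]
    exact hwm _ isOpen_ball
  have H : ∀ n₀ j : ℕ, ∃ s : X → B, Measurable s ∧ (∀ x, s x ∈ F x) ∧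
      ∀ x, dist (s x) (b n₀) ≤ infDist (b n₀) (F x) + 3 * (1 / (j+1 : ℝ)) := by
    intro n₀ j
    exact exists_selection_near F hne hcl b hb hD n₀ (by positivity)
  choose sel hm hmem hdist using H
  refine ⟨fun k => sel k.unpair.1 k.unpair.2, fun k => hm _ _, fun k x => hmem _ _ x, ?_⟩
  intro x v hv ε hε
  obtain ⟨n₀, hn₀⟩ := hb.exists_dist_lt v (show (0:ℝ) < ε/5 by linarith)
  obtain ⟨j, hj⟩ := exists_nat_one_div_lt (show (0:ℝ) < ε/5 by linarith)
  refine ⟨Nat.pair n₀ j, ?_⟩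
  simp only [Nat.unpair_pair]
  show dist (sel n₀ j x) v < ε
  have hbn : dist (b n₀) v < ε/5 := by rwa [dist_comm] at hn₀
  have hinf : infDist (b n₀) (F x) < ε/5 :=
    lt_of_le_of_lt (infDist_le_dist_of_mem hv) hbn
  calc dist (sel n₀ j x) v ≤ dist (sel n₀ j x) (b n₀) + dist (b n₀) v := dist_triangle _ _ _
    _ ≤ (infDist (b n₀) (F x) + 3 * (1 / (j+1 : ℝ))) + dist (b n₀) v := by linarith [hdist n₀ j x]
    _ < ε/5 + 3 * (ε/5) + ε/5 := by
        have : (1 : ℝ) / (j+1) < ε/5 := by exact_mod_cast hj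
        linarith
    _ = ε := by ring

end Castaing


section Main

variable {X B : Type*} [MeasurableSpace X] [NormedAddCommGroup B] [NormedSpace ℝ B]

set_option maxHeartbeats 1000000 in
set_option synthInstance.maxHeartbeats 1000000 in
private theorem aux_dual_norm
    (m : Measure X) [SigmaFinite m] [CompleteSpace B]
    [TopologicalSpace.SeparableSpace B]
    (fiber : X → Submodule ℝ B)
    (ω : ∀ x, ↥(fiber x) →L[ℝ] ℝ)
    (castaing : ∃ s : ℕ → X → B, (∀ k, StronglyMeasurable (s k)) ∧ (∀ k x, s k x ∈ fiber x) ∧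
      ∀ x, ∀ v ∈ (fiber x : Set B), ∀ ε : ℝ, 0 < ε → ∃ k, dist (s k x) v < ε) :
    (∀ (v : X → B) (hv : ∀ x, v x ∈ fiber x), MeasureTheory.StronglyMeasurable v →
      (∀ x, ‖v x‖ ≤ 1) → ∀ᵐ x ∂m, ω x ⟨v x, hv x⟩ ≤ ‖ω x‖) ∧
    (∀ g : X → ℝ,
      (∀ (v : X → B) (hv : ∀ x, v x ∈ fiber x), MeasureTheory.StronglyMeasurable v →
        (∀ x, ‖v x‖ ≤ 1) → ∀ᵐ x ∂m, ω x ⟨v x, hv x⟩ ≤ g x) →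
      ∀ᵐ x ∂m, ‖ω x‖ ≤ g x) := by
  constructor
  · intro v hv hsm hb1
    refine Eventually.of_forall fun x => ?_
    calc ω x ⟨v x, hv x⟩ ≤ |ω x ⟨v x, hv x⟩| := le_abs_self _
      _ ≤ ‖ω x‖ * ‖(⟨v x, hv x⟩ : fiber x)‖ := (ω x).le_opNorm _
      _ ≤ ‖ω x‖ * 1 := by
          have h1 : ‖(⟨v x, hv x⟩ : fiber x)‖ = ‖v x‖ := rfl
          rw [h1]
          exact mul_le_mul_of_nonneg_left (hb1 x) ((ω x).opNorm_nonneg)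
      _ = ‖ω x‖ := mul_one _
  · intro g hg
    obtain ⟨s, hsm, hsmem, hsdense⟩ := castaing
    -- truncated sections
    set u : ℕ → X → B := fun k x => (max 1 ‖s k x‖)⁻¹ • s k x with hudef
    have humem : ∀ k x, u k x ∈ fiber x := fun k x =>
      Submodule.smul_mem _ _ (hsmem k x)
    have husm : ∀ k, StronglyMeasurable (u k) := by
      intro k
      have hc : Continuous fun v : B => (max 1 ‖v‖)⁻¹ • v := by
        refine Continuous.smul (Continuous.inv₀ (continuous_const.max continuous_norm) ?_)
          continuous_id
        intro v
        positivity
      exact hc.comp_stronglyMeasurable (hsm k)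
    have hub : ∀ k x, ‖u k x‖ ≤ 1 := by
      intro k x
      have hpos : (0:ℝ) < max 1 ‖s k x‖ := lt_of_lt_of_le one_pos (le_max_left _ _)
      rw [hudef]
      simp only [norm_smul, norm_inv, Real.norm_eq_abs, abs_of_pos hpos]
      calc (max 1 ‖s k x‖)⁻¹ * ‖s k x‖ ≤ (max 1 ‖s k x‖)⁻¹ * (max 1 ‖s k x‖) := by
            gcongr
            exact le_max_right _ _
        _ = 1 := inv_mul_cancel₀ (ne_of_gt hpos)
    have hae : ∀ k, ∀ᵐ x ∂m, ω x ⟨u k x, humem k x⟩ ≤ g x :=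
      fun k => hg (u k) (humem k) (husm k) (hub k)
    have h0 : ∀ᵐ x ∂m, (0:ℝ) ≤ g x := by
      have := hg (fun _ => 0) (fun x => (fiber x).zero_mem) stronglyMeasurable_const
        (fun x => by simp)
      filter_upwards [this] with x hx
      have hz : (⟨(0:B), (fiber x).zero_mem⟩ : fiber x) = 0 := rfl
      rw [hz, map_zero] at hx
      exact hx
    filter_upwards [ae_all_iff.2 hae, h0] with x hx hgx
    -- at a good point x
    have key : ∀ w : fiber x, ‖w‖ ≤ 1 → ω x w ≤ g x := by
      intro w hw
      refine le_of_forall_pos_le_add fun δ hδ => ?_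
      set N := ‖ω x‖ with hN
      have hNnn : 0 ≤ N := (ω x).opNorm_nonneg
      set ε := min 1 (δ / (2 * (N + 1))) with hε
      have hεpos : 0 < ε := lt_min one_pos (by positivity)
      have hε1 : ε ≤ 1 := min_le_left _ _
      have hε2 : ε * (2 * (N + 1)) ≤ δ := by
        have := min_le_right 1 (δ / (2 * (N + 1)))
        rw [hε]
        calc min 1 (δ / (2 * (N + 1))) * (2 * (N + 1))
            ≤ (δ / (2 * (N + 1))) * (2 * (N + 1)) :=
              mul_le_mul_of_nonneg_right (min_le_right _ _) (by positivity)
          _ = δ := by field_simp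
      -- approximate (1-ε) • w by some s k x
      have hwv : (1 - ε) • (w : B) ∈ fiber x := Submodule.smul_mem _ _ w.2
      obtain ⟨k, hk⟩ := hsdense x ((1 - ε) • (w : B)) hwv (ε * ε) (by positivity)
      have hsknorm : ‖s k x‖ ≤ 1 := by
        have h1 : ‖s k x‖ ≤ ‖(1 - ε) • (w : B)‖ + dist (s k x) ((1 - ε) • (w : B)) := by
          rw [dist_eq_norm]
          have := norm_sub_norm_le (s k x) ((1 - ε) • (w : B))
          linarith
        have h2 : ‖(1 - ε) • (w : B)‖ ≤ 1 - ε := by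
          rw [norm_smul, Real.norm_eq_abs, abs_of_nonneg (by linarith)]
          have h21 : (1 - ε) * ‖(w : B)‖ ≤ (1 - ε) * 1 :=
            mul_le_mul_of_nonneg_left hw (by linarith)
          linarith
        nlinarith [hk.le, hεpos.le]
      have hueq : u k x = s k x := by
        rw [hudef]
        simp only [max_eq_left hsknorm, inv_one, one_smul]
      set ws : fiber x := ⟨s k x, hsmem k x⟩ with hws
      have hxk : ω x ws ≤ g x := by
        have := hx k
        have he : (⟨u k x, humem k x⟩ : fiber x) = ws := Subtype.ext hueq
        rwa [he] at this
      have hdiff : ‖w - ws‖ ≤ 2 * ε := by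
        have hcoe : ((w - ws : fiber x) : B) = (w : B) - s k x := rfl
        have h1 : ‖w - ws‖ = ‖(w : B) - s k x‖ := by rw [← hcoe]; rfl
        rw [h1]
        have h2 : ‖(w : B) - s k x‖ ≤ ‖(w : B) - (1 - ε) • (w : B)‖ + ‖(1 - ε) • (w : B) - s k x‖ := by
          have := norm_sub_le_norm_sub_add_norm_sub (w : B) ((1 - ε) • (w : B)) (s k x)
          linarith [norm_sub_le ((w:B) - (1-ε) • (w:B)) ((1-ε) • (w:B) - s k x)]
        have h3 : ‖(w : B) - (1 - ε) • (w : B)‖ = ε * ‖(w : B)‖ := by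
          have : (w : B) - (1 - ε) • (w : B) = ε • (w : B) := by
            rw [sub_smul, one_smul]
            abel
          rw [this, norm_smul, Real.norm_eq_abs, abs_of_pos hεpos]
        have h4 : ‖(1 - ε) • (w : B) - s k x‖ < ε * ε := by
          rw [← dist_eq_norm, dist_comm]
          exact hk
        have h5 : ε * ‖(w : B)‖ ≤ ε := by
          calc ε * ‖(w : B)‖ ≤ ε * 1 := by gcongr; exact hw
            _ = ε := mul_one _
        nlinarith [hεpos.le]
      calc ω x w = ω x ws + ω x (w - ws) := by rw [map_sub]; ring
        _ ≤ g x + ‖ω x‖ * ‖w - ws‖ := by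
            have := (ω x).le_opNorm (w - ws)
            have habs : ω x (w - ws) ≤ |ω x (w - ws)| := le_abs_self _
            have : ω x (w - ws) ≤ ‖ω x‖ * ‖w - ws‖ := by
              calc ω x (w - ws) ≤ |ω x (w - ws)| := le_abs_self _
                _ = ‖ω x (w - ws)‖ := (Real.norm_eq_abs _).symm
                _ ≤ ‖ω x‖ * ‖w - ws‖ := (ω x).le_opNorm _
            linarith
        _ ≤ g x + N * (2 * ε) := by
            have : ‖ω x‖ * ‖w - ws‖ ≤ N * (2 * ε) := by
              rw [← hN]
              exact mul_le_mul_of_nonneg_left hdiff hNnn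
            linarith
        _ ≤ g x + δ := by nlinarith [hεpos.le, hNnn]
    -- conclude operator norm bound
    refine (ω x).opNorm_le_bound' hgx fun w hw => ?_
    have hwpos : 0 < ‖w‖ := lt_of_le_of_ne (norm_nonneg _) (Ne.symm hw)
    set w' : fiber x := ‖w‖⁻¹ • w with hw'
    have hw'n : ‖w'‖ = 1 := by
      have h : ‖w'‖ = ‖w‖⁻¹ * ‖w‖ := by
        rw [hw', norm_smul, Real.norm_eq_abs, abs_of_pos (by positivity)]
      rw [h, inv_mul_cancel₀ (ne_of_gt hwpos)]
    have h1 : ω x w' ≤ g x := key w' hw'n.le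
    have h2 : ω x (-w') ≤ g x := by
      refine key (-w') ?_
      rw [norm_neg, hw'n]
    have habs : |ω x w'| ≤ g x := by
      rw [abs_le]
      constructor
      · have : -(ω x w') = ω x (-w') := by rw [map_neg]
        linarith [h2, this ▸ h2]
      · exact h1
    have hrec : w = ‖w‖ • w' := by
      rw [hw', smul_smul, mul_inv_cancel₀ (ne_of_gt hwpos), one_smul]
    calc ‖ω x w‖ = ‖ω x (‖w‖ • w')‖ := by rw [← hrec]
      _ = ‖w‖ * |ω x w'| := by
          rw [ContinuousLinearMap.map_smul]
          simp only [smul_eq_mul, Real.norm_eq_abs, abs_mul, abs_of_pos hwpos]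
      _ ≤ ‖w‖ * g x := mul_le_mul_of_nonneg_left habs hwpos.le
      _ = g x * ‖w‖ := mul_comm _ _

end Main

/-- With `B` separable, the function `x ↦ ‖ω(x)‖_{E(x)'}` is the essential supremum (the
least a.e. upper bound) of the pairings of `ω` with the sections of `E` of pointwise norm at
most `1`; i.e. the module-theoretic pointwise norm `|ω|` coincides a.e. with
`x ↦ ‖ω(x)‖_{E(x)'}`. -/

theorem pointwise_norm_dual_section_eq_norm
    {X B : Type*} [MeasurableSpace X] (m : Measure X) [SigmaFinite m]
    [NormedAddCommGroup B] [NormedSpace ℝ B] [CompleteSpace B]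
    [TopologicalSpace.SeparableSpace B]
    (E : BanachBundle X B) (ω : ∀ x, ↥(E.fiber x) →L[ℝ] ℝ)
    (hω : IsWeakStarMeasurableSection m E ω) :
    (∀ (v : X → B) (hv : ∀ x, v x ∈ E.fiber x), MeasureTheory.StronglyMeasurable v →
      (∀ x, ‖v x‖ ≤ 1) → ∀ᵐ x ∂m, ω x ⟨v x, hv x⟩ ≤ ‖ω x‖) ∧
    (∀ g : X → ℝ,
      (∀ (v : X → B) (hv : ∀ x, v x ∈ E.fiber x), MeasureTheory.StronglyMeasurable v →
        (∀ x, ‖v x‖ ≤ 1) → ∀ᵐ x ∂m, ω x ⟨v x, hv x⟩ ≤ g x) →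
      ∀ᵐ x ∂m, ‖ω x‖ ≤ g x) := by
  classical
  letI : MeasurableSpace B := borel B
  haveI : BorelSpace B := ⟨rfl⟩
  haveI : SecondCountableTopology B := UniformSpace.secondCountable_of_separable B
  obtain ⟨s, hm, hmem, hdense⟩ := exists_castaing (fun x => (E.fiber x : Set B))
    (fun x => ⟨0, (E.fiber x).zero_mem⟩) E.isClosed_fiber E.weaklyMeasurable
  exact aux_dual_norm m E.fiber ω
    ⟨s, fun k => (hm k).stronglyMeasurable, hmem, hdense⟩
end

section
/- Let (X,Σ,m) be a σ-finite measure space, M a module over L^∞(m), and ‖·‖ a complete norm on M with p ∈ [1,∞) such that ‖1_E · v‖^p + ‖1_{X∖E} · v‖^p = ‖v‖^p for all E ∈ Σ, v ∈ M, and ‖f_n · v‖ → 0 whenever f_n ⇀ 0 weakly* in L^∞(m). Then for every v ∈ M and every sequence of pairwise disjoint sets (E_n) ⊆ Σ with union E, it holds that ‖1_E · v‖^p = Σ_n ‖1_{E_n} · v‖^p; in particular, E ↦ ‖1_E · v‖^p is a finite measure on Σ absolutely continuous with respect to m. -/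
open MeasureTheory Filter
open scoped ENNReal

/-!
Splitting `1_{E ∪ F} v` along `E` shows that `ν(E) = ‖1_E v‖^p` is finitely additive on
measurable sets. For a disjoint sequence `(E_n)` with union `U`, the indicators of the tails
`U ∖ (E_0 ∪ ⋯ ∪ E_n)` decrease to `0`, so they tend to `0` weakly* and weak* continuity gives
`ν(U ∖ (E_0 ∪ ⋯ ∪ E_n)) → 0`. A finite additive content on a ring of sets that is continuous at
`∅` is σ-additive, so `ν` is a finite measure; it vanishes on `m`-null sets because `1_E = 0`
in `L^∞(m)` for those.
-/
open Function Topology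

lemma hasSum_of_ofReal_eq_tsum {a : ℝ} {b : ℕ → ℝ} (ha : 0 ≤ a) (hb : ∀ n, 0 ≤ b n)
    (h : ENNReal.ofReal a = ∑' n, ENNReal.ofReal (b n)) : HasSum b a := by
  have hsum : Summable b :=
    (ENNReal.summable_toReal (h ▸ ENNReal.ofReal_ne_top)).congr fun n =>
      ENNReal.toReal_ofReal (hb n)
  rw [← ENNReal.ofReal_tsum_of_nonneg hb hsum,
    ENNReal.ofReal_eq_ofReal_iff ha (tsum_nonneg hb)] at h
  exact h ▸ hsum.hasSum

section

variable {X : Type*} [MeasurableSpace X] {m : Measure X}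

/-- `1_E` in `L^∞(m)`, with the junk value `0` when `E` is not measurable. -/
noncomputable def indicatorLinfty (m : Measure X) (E : Set X) : Lp ℝ ∞ m := by
  classical
  exact if hE : MeasurableSet E then ((memLp_top_const (1 : ℝ)).indicator hE).toLp _ else 0

lemma coeFn_indicatorLinfty {E : Set X} (hE : MeasurableSet E) :
    (indicatorLinfty m E : X → ℝ) =ᵐ[m] E.indicator fun _ => (1 : ℝ) := by
  rw [indicatorLinfty, dif_pos hE]
  exact MemLp.coeFn_toLp _

lemma tendsto_integral_indicatorLinfty_mul {s : ℕ → Set X} (hs : ∀ n, MeasurableSet (s n))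
    (hanti : Antitone s) (hempty : ⋂ n, s n = ∅) {g : X → ℝ} (hg : Integrable g m) :
    Tendsto (fun n => ∫ x, indicatorLinfty m (s n) x * g x ∂m) atTop (𝓝 0) := by
  have h := tendsto_setIntegral_of_antitone (μ := m) hs hanti ⟨0, hg.integrableOn⟩
  rw [hempty, Measure.restrict_empty, integral_zero_measure] at h
  refine h.congr fun n => ?_
  rw [← integral_indicator (hs n)]
  refine integral_congr_ae ?_
  filter_upwards [coeFn_indicatorLinfty (m := m) (hs n)] with x hx
  by_cases hxs : x ∈ s n <;> simp [hx, hxs]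

lemma isSetRing_measurableSet : IsSetRing {s : Set X | MeasurableSet s} :=
  ⟨MeasurableSet.empty, fun _ _ => .union, fun _ _ => .diff⟩

end

namespace LinftyModuleStruct

variable {X : Type*} [MeasurableSpace X] {m : Measure X}
  {M : Type*} [NormedAddCommGroup M] [Module ℝ M] (A : LinftyModuleStruct m M)

lemma smul_eq_smul_indicatorLinfty {E : Set X} (hE : MeasurableSet E) {f : Lp ℝ ∞ m}
    (hf : (f : X → ℝ) =ᵐ[m] E.indicator fun _ => (1 : ℝ)) (v : M) :
    A.smul f v = A.smul (indicatorLinfty m E) v := by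
  rw [Lp.ext (hf.trans (coeFn_indicatorLinfty hE).symm)]

lemma smul_indicatorLinfty_of_measure_zero {E : Set X} (hE : MeasurableSet E) (hE0 : m E = 0)
    (v : M) : A.smul (indicatorLinfty m E) v = 0 := by
  have hnull : ∀ᵐ x ∂m, x ∉ E := measure_eq_zero_iff_ae_notMem.mp hE0
  rw [A.const_smul _ 0 v, zero_smul]
  filter_upwards [coeFn_indicatorLinfty (m := m) hE, hnull] with x hx hxE
  simp [hx, hxE]

lemma smul_indicatorLinfty_inter {E F : Set X} (hE : MeasurableSet E) (hF : MeasurableSet F)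
    (v : M) : A.smul (indicatorLinfty m (E ∩ F)) v
      = A.smul (indicatorLinfty m E) (A.smul (indicatorLinfty m F) v) := by
  refine A.mul_smul _ _ _ v ?_
  filter_upwards [coeFn_indicatorLinfty (m := m) (hE.inter hF), coeFn_indicatorLinfty (m := m) hE,
    coeFn_indicatorLinfty (m := m) hF] with x hEF hE hF
  rw [hEF, hE, hF]
  exact congrFun (Set.inter_indicator_one (s := E) (t := F)) x

def NormPowSplits (p : ℝ) : Prop :=
  ∀ E : Set X, MeasurableSet E → ∀ (f g : Lp ℝ ∞ m) (v : M),
    ((f : X → ℝ) =ᵐ[m] E.indicator fun _ => (1 : ℝ)) →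
    ((g : X → ℝ) =ᵐ[m] Eᶜ.indicator fun _ => (1 : ℝ)) →
    ‖A.smul f v‖ ^ p + ‖A.smul g v‖ ^ p = ‖v‖ ^ p

def IsWeakStarSeqContinuous : Prop :=
  ∀ (v : M) (f : ℕ → Lp ℝ ∞ m),
    (∀ g : X → ℝ, Integrable g m → Tendsto (fun n => ∫ x, (f n) x * g x ∂m) atTop (𝓝 0)) →
    Tendsto (fun n => ‖A.smul (f n) v‖) atTop (𝓝 0)

variable {A} {p : ℝ}

/-- Split `1_{E ∪ F} v` along `E`: its two pieces are `1_E v` and `1_F v`. -/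
lemma NormPowSplits.norm_smul_indicatorLinfty_union_rpow (hA : A.NormPowSplits p) {E F : Set X}
    (hE : MeasurableSet E) (hF : MeasurableSet F) (hEF : Disjoint E F) (v : M) :
    ‖A.smul (indicatorLinfty m (E ∪ F)) v‖ ^ p
      = ‖A.smul (indicatorLinfty m E) v‖ ^ p + ‖A.smul (indicatorLinfty m F) v‖ ^ p := by
  have hsplit := hA E hE _ _ (A.smul (indicatorLinfty m (E ∪ F)) v) (coeFn_indicatorLinfty hE)
    (coeFn_indicatorLinfty hE.compl)
  have hE' : E ∩ (E ∪ F) = E := Set.inter_eq_left.2 Set.subset_union_left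
  have hF' : Eᶜ ∩ (E ∪ F) = F := by
    rw [Set.inter_union_distrib_left, Set.compl_inter_self, Set.empty_union,
      Set.inter_eq_right.2 hEF.subset_compl_left]
  rw [← A.smul_indicatorLinfty_inter hE (hE.union hF),
    ← A.smul_indicatorLinfty_inter hE.compl (hE.union hF), hE', hF'] at hsplit
  exact hsplit.symm

noncomputable def normPowContent (hp : p ≠ 0) (hA : A.NormPowSplits p) (v : M) :
    AddContent ℝ≥0∞ {s : Set X | MeasurableSet s} :=
  isSetRing_measurableSet.addContent_of_union
    (fun E => ENNReal.ofReal (‖A.smul (indicatorLinfty m E) v‖ ^ p))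
    (by simp [A.smul_indicatorLinfty_of_measure_zero .empty measure_empty, hp])
    (fun hE hF hEF => by
      rw [hA.norm_smul_indicatorLinfty_union_rpow hE hF hEF,
        ENNReal.ofReal_add (by positivity) (by positivity)])

lemma normPowContent_apply (hp : p ≠ 0) (hA : A.NormPowSplits p) (v : M) (E : Set X) :
    normPowContent hp hA v E = ENNReal.ofReal (‖A.smul (indicatorLinfty m E) v‖ ^ p) :=
  rfl

lemma IsWeakStarSeqContinuous.tendsto_norm_smul_indicatorLinfty (hA : A.IsWeakStarSeqContinuous)
    {s : ℕ → Set X} (hs : ∀ n, MeasurableSet (s n)) (hanti : Antitone s) (hempty : ⋂ n, s n = ∅)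
    (v : M) : Tendsto (fun n => ‖A.smul (indicatorLinfty m (s n)) v‖) atTop (𝓝 0) :=
  hA v _ fun _ hg => tendsto_integral_indicatorLinfty_mul hs hanti hempty hg

theorem normPowContent_iUnion (hp : 0 < p) (hA : A.NormPowSplits p)
    (hA' : A.IsWeakStarSeqContinuous) (v : M) {Es : ℕ → Set X} (hEs : ∀ n, MeasurableSet (Es n))
    (hd : Pairwise (Disjoint on Es)) :
    normPowContent hp.ne' hA v (⋃ n, Es n) = ∑' n, normPowContent hp.ne' hA v (Es n) := by
  refine addContent_iUnion_eq_sum_of_tendsto_zero isSetRing_measurableSet _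
    (fun _ _ => ENNReal.ofReal_ne_top) (fun s hs hanti hempty => ?_) hEs (.iUnion hEs) hd
  have h := ENNReal.tendsto_ofReal <| (Real.continuousAt_rpow_const 0 p (.inr hp.le)).tendsto.comp
    (hA'.tendsto_norm_smul_indicatorLinfty hs hanti hempty v)
  simpa [normPowContent_apply, Real.zero_rpow hp.ne'] using h

theorem hasSum_norm_smul_indicatorLinfty_rpow (hp : 0 < p) (hA : A.NormPowSplits p)
    (hA' : A.IsWeakStarSeqContinuous) (v : M) {Es : ℕ → Set X} (hEs : ∀ n, MeasurableSet (Es n))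
    (hd : Pairwise (Disjoint on Es)) :
    HasSum (fun n => ‖A.smul (indicatorLinfty m (Es n)) v‖ ^ p)
      (‖A.smul (indicatorLinfty m (⋃ n, Es n)) v‖ ^ p) :=
  hasSum_of_ofReal_eq_tsum (by positivity) (fun _ => by positivity)
    (normPowContent_iUnion hp hA hA' v hEs hd)

noncomputable def normPowMeasure (hp : 0 < p) (hA : A.NormPowSplits p)
    (hA' : A.IsWeakStarSeqContinuous) (v : M) : Measure X :=
  Measure.ofMeasurable (fun E _ => normPowContent hp.ne' hA v E) addContent_empty
    fun _ hEs hd => normPowContent_iUnion hp hA hA' v hEs hd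

lemma normPowMeasure_apply (hp : 0 < p) (hA : A.NormPowSplits p)
    (hA' : A.IsWeakStarSeqContinuous) (v : M) {E : Set X} (hE : MeasurableSet E) :
    normPowMeasure hp hA hA' v E = ENNReal.ofReal (‖A.smul (indicatorLinfty m E) v‖ ^ p) :=
  Measure.ofMeasurable_apply E hE

lemma isFiniteMeasure_normPowMeasure (hp : 0 < p) (hA : A.NormPowSplits p)
    (hA' : A.IsWeakStarSeqContinuous) (v : M) :
    IsFiniteMeasure (normPowMeasure hp hA hA' v) :=
  ⟨(normPowMeasure_apply hp hA hA' v .univ).trans_lt ENNReal.ofReal_lt_top⟩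

lemma normPowMeasure_absolutelyContinuous (hp : 0 < p) (hA : A.NormPowSplits p)
    (hA' : A.IsWeakStarSeqContinuous) (v : M) : normPowMeasure hp hA hA' v ≪ m :=
  .mk fun E hE hE0 => by
    simp [normPowMeasure_apply hp hA hA' v hE, A.smul_indicatorLinfty_of_measure_zero hE hE0,
      hp.ne']

end LinftyModuleStruct

open LinftyModuleStruct

theorem norm_pow_indicator_countably_additive_general
    {X : Type*} [MeasurableSpace X] (m : Measure X)
    {M : Type*} [NormedAddCommGroup M] [Module ℝ M]
    (p : ℝ) (hp : 1 ≤ p)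
    (A : LinftyModuleStruct m M)
    (ha : ∀ E : Set X, MeasurableSet E → ∀ (f g : Lp ℝ ∞ m) (v : M),
      ((f : X → ℝ) =ᵐ[m] E.indicator fun _ => (1 : ℝ)) →
      ((g : X → ℝ) =ᵐ[m] Eᶜ.indicator fun _ => (1 : ℝ)) →
      ‖A.smul f v‖ ^ p + ‖A.smul g v‖ ^ p = ‖v‖ ^ p)
    (hb : ∀ (v : M) (f : ℕ → Lp ℝ ∞ m),
      (∀ g : X → ℝ, Integrable g m →
        Tendsto (fun n => ∫ x, (f n) x * g x ∂m) atTop (nhds 0)) →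
      Tendsto (fun n => ‖A.smul (f n) v‖) atTop (nhds 0))
    (v : M) :
    (∀ (Es : ℕ → Set X), (∀ n, MeasurableSet (Es n)) →
      Pairwise (Function.onFun Disjoint Es) →
      ∀ (f : Lp ℝ ∞ m) (fn : ℕ → Lp ℝ ∞ m),
        ((f : X → ℝ) =ᵐ[m] (⋃ n, Es n).indicator fun _ => (1 : ℝ)) →
        (∀ n, ((fn n : X → ℝ)) =ᵐ[m] (Es n).indicator fun _ => (1 : ℝ)) →
        ‖A.smul f v‖ ^ p = ∑' n, ‖A.smul (fn n) v‖ ^ p) ∧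
    (∃ μ : Measure X, IsFiniteMeasure μ ∧ μ ≪ m ∧
      ∀ E : Set X, MeasurableSet E → ∀ f : Lp ℝ ∞ m,
        ((f : X → ℝ) =ᵐ[m] E.indicator fun _ => (1 : ℝ)) →
        μ E = ENNReal.ofReal (‖A.smul f v‖ ^ p)) := by
  have hp0 : 0 < p := zero_lt_one.trans_le hp
  refine ⟨fun Es hEs hd f fn hf hfn => ?_, normPowMeasure hp0 ha hb v,
    isFiniteMeasure_normPowMeasure hp0 ha hb v,
    normPowMeasure_absolutelyContinuous hp0 ha hb v, fun E hE f hf => ?_⟩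
  · simp_rw [A.smul_eq_smul_indicatorLinfty (.iUnion hEs) hf,
      A.smul_eq_smul_indicatorLinfty (hEs _) (hfn _)]
    exact (hasSum_norm_smul_indicatorLinfty_rpow hp0 ha hb v hEs hd).tsum_eq.symm
  · rw [normPowMeasure_apply hp0 ha hb v hE, A.smul_eq_smul_indicatorLinfty hE hf]

/-- Under the hypotheses of the pointwise-norm criterion (indicator splitting and weak*
sequential continuity), the set function `E ↦ ‖1_E · v‖^p` is countably additive; in
particular it extends to a finite measure on `Σ` absolutely continuous w.r.t. `m`. -/
theorem norm_pow_indicator_countably_additive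
    {X : Type*} [MeasurableSpace X] (m : Measure X) [SigmaFinite m]
    {M : Type*} [NormedAddCommGroup M] [Module ℝ M] [CompleteSpace M]
    (p : ℝ) (hp : 1 ≤ p)
    (A : LinftyModuleStruct m M)
    (ha : ∀ E : Set X, MeasurableSet E → ∀ (f g : Lp ℝ ∞ m) (v : M),
      ((f : X → ℝ) =ᵐ[m] E.indicator fun _ => (1 : ℝ)) →
      ((g : X → ℝ) =ᵐ[m] Eᶜ.indicator fun _ => (1 : ℝ)) →
      ‖A.smul f v‖ ^ p + ‖A.smul g v‖ ^ p = ‖v‖ ^ p)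
    (hb : ∀ (v : M) (f : ℕ → Lp ℝ ∞ m),
      (∀ g : X → ℝ, Integrable g m →
        Tendsto (fun n => ∫ x, (f n) x * g x ∂m) atTop (nhds 0)) →
      Tendsto (fun n => ‖A.smul (f n) v‖) atTop (nhds 0))
    (v : M) :
    (∀ (Es : ℕ → Set X), (∀ n, MeasurableSet (Es n)) →
      Pairwise (Function.onFun Disjoint Es) →
      ∀ (f : Lp ℝ ∞ m) (fn : ℕ → Lp ℝ ∞ m),
        ((f : X → ℝ) =ᵐ[m] (⋃ n, Es n).indicator fun _ => (1 : ℝ)) →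
        (∀ n, ((fn n : X → ℝ)) =ᵐ[m] (Es n).indicator fun _ => (1 : ℝ)) →
        ‖A.smul f v‖ ^ p = ∑' n, ‖A.smul (fn n) v‖ ^ p) ∧
    (∃ μ : Measure X, IsFiniteMeasure μ ∧ μ ≪ m ∧
      ∀ E : Set X, MeasurableSet E → ∀ f : Lp ℝ ∞ m,
        ((f : X → ℝ) =ᵐ[m] E.indicator fun _ => (1 : ℝ)) →
        μ E = ENNReal.ofReal (‖A.smul f v‖ ^ p)) :=
  norm_pow_indicator_countably_additive_general m p hp A ha hb v
end
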